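/- arXiv:1712.09621 — 10 statements merged into one kernel-verified Lean document; each statement's English description precedes it below -/
import Mathlib

section
/- Let {H_j, I_{j,k}} be a countable inductive system of Hilbert spaces with inductive limit (H, I_j), and let D_j be densely defined self-adjoint operators on H_j compatible with the connecting isometries (i.e. I_{j,k}(Dom D_j) ⊆ Dom D_k and D_k(I_{j,k}ξ) = I_{j,k}(D_jξ) for ξ ∈ Dom D_j, j ≤ k). Then the operator D₀ on H with domain 𝒟 = ⋃_j I_j(Dom D_j), given by D₀(I_jξ) = I_j(D_jξ) for ξ ∈ Dom D_j, is well defined, densely defined, symmetric, and essentially self-adjoint: its closure is a self-adjoint operator. -/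
/-!
The limit operator `D₀` is the directed union of the operators `J_j D_j J_j⁻¹` on
`J_j (Dom D_j)`. Any two vectors of its domain lie in a common `J_j (Dom D_j)`, where the isometry
`J_j` carries over the symmetry of `D_j`; so `D₀` is symmetric, and densely defined since each
`Dom D_j` is dense.
Essential self-adjointness follows from the basic criterion: a densely defined symmetric operator
`T` for which `T + i` and `T - i` have dense range has self-adjoint closure. Self-adjointness
makes `D_j ± i` onto `H_j`, so the range of `D₀ ± i` contains every `J_j (H_j)`, hence is dense.
-/

open scoped InnerProductSpace ComplexConjugate

theorem Dense.iUnion_image {ι Y : Type*} {X : ι → Type*} [∀ i, TopologicalSpace (X i)]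
    [TopologicalSpace Y] {f : ∀ i, X i → Y} (hf : ∀ i, Continuous (f i))
    (hrange : Dense (⋃ i, Set.range (f i))) {s : ∀ i, Set (X i)} (hs : ∀ i, Dense (s i)) :
    Dense (⋃ i, f i '' s i) := by
  refine dense_closure.mp (hrange.mono (Set.iUnion_subset fun i => ?_))
  rintro _ ⟨x, rfl⟩
  refine closure_mono (Set.subset_iUnion (fun i => f i '' s i) i) ?_
  exact image_closure_subset_closure_image (hf i) ⟨x, (hs i).closure_eq ▸ Set.mem_univ x, rfl⟩

namespace LinearPMap

section RangeAddSMul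

variable {R E : Type*} [CommRing R] [AddCommGroup E] [Module R E]

def rangeAddSMul (T : E →ₗ.[R] E) (c : R) : Submodule R E :=
  LinearMap.range (T.toFun + c • T.domain.subtype)

theorem mem_rangeAddSMul {T : E →ₗ.[R] E} {c : R} {y : E} :
    y ∈ T.rangeAddSMul c ↔ ∃ x : T.domain, T x + c • (x : E) = y :=
  Iff.rfl

theorem rangeAddSMul_mono {T S : E →ₗ.[R] E} (h : T ≤ S) (c : R) :
    T.rangeAddSMul c ≤ S.rangeAddSMul c := by
  rintro _ ⟨x, rfl⟩
  exact ⟨⟨x, h.1 x.2⟩, congrArg (· + c • (x : E)) (h.2 rfl).symm⟩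

end RangeAddSMul

section Transport

variable {R E F : Type*} [Ring R] [AddCommGroup E] [Module R E] [AddCommGroup F] [Module R F]

noncomputable def transport (T : E →ₗ.[R] E) (f : E →ₗ[R] F) (hf : Function.Injective f) :
    F →ₗ.[R] F where
  domain := T.domain.map f
  toFun := f ∘ₗ T.toFun ∘ₗ (Submodule.equivMapOfInjective f hf T.domain).symm.toLinearMap

variable {T : E →ₗ.[R] E} {f : E →ₗ[R] F} {hf : Function.Injective f}

theorem transport_apply (x : T.domain) {y : (T.transport f hf).domain} (h : (y : F) = f x) :
    T.transport f hf y = f (T x) := by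
  have hx : (Submodule.equivMapOfInjective f hf T.domain).symm y = x :=
    (LinearEquiv.symm_apply_eq _).mpr (Subtype.ext h)
  exact congrArg (f ∘ T) hx

theorem exists_eq_of_mem_domain_transport {y : F} (hy : y ∈ (T.transport f hf).domain) :
    ∃ x : T.domain, f x = y := by
  obtain ⟨x, hx, rfl⟩ := Submodule.mem_map.mp hy
  exact ⟨⟨x, hx⟩, rfl⟩

theorem transport_le_transport {E' : Type*} [AddCommGroup E'] [Module R E'] {S : E' →ₗ.[R] E'}
    {i : E →ₗ[R] E'} {g : E' →ₗ[R] F} {hg : Function.Injective g} (hgi : ∀ x, g (i x) = f x)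
    (hTS : ∀ x : T.domain, ∃ h : i x ∈ S.domain, S ⟨i x, h⟩ = i (T x)) :
    T.transport f hf ≤ S.transport g hg := by
  refine ⟨?_, fun y z hyz => ?_⟩
  · rintro _ ⟨x, hx, rfl⟩
    exact ⟨i x, (hTS ⟨x, hx⟩).1, hgi x⟩
  · obtain ⟨x, hx⟩ := exists_eq_of_mem_domain_transport y.2
    obtain ⟨hix, hSix⟩ := hTS x
    rw [transport_apply x hx.symm, transport_apply ⟨i x, hix⟩ (by rw [← hyz, ← hx, hgi]), hSix,
      hgi]

theorem rangeAddSMul_transport {R : Type*} [CommRing R] [Module R E] [Module R F]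
    {T : E →ₗ.[R] E} {f : E →ₗ[R] F} {hf : Function.Injective f} (c : R) :
    (T.transport f hf).rangeAddSMul c = (T.rangeAddSMul c).map f := by
  ext y
  constructor
  · rintro ⟨y, rfl⟩
    obtain ⟨x, hx⟩ := exists_eq_of_mem_domain_transport y.2
    refine ⟨T x + c • (x : E), ⟨x, rfl⟩, ?_⟩
    change _ = T.transport f hf y + c • (y : F)
    rw [transport_apply x hx.symm, ← hx, _root_.map_add, _root_.map_smul]
  · rintro ⟨_, ⟨x, rfl⟩, rfl⟩
    refine ⟨⟨f x, x, x.2, rfl⟩, ?_⟩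
    change T.transport f hf _ + c • f x = f (T x + c • (x : E))
    rw [transport_apply x rfl, _root_.map_add, _root_.map_smul]

theorem IsFormalAdjoint.transport {𝕜 E F : Type*} [RCLike 𝕜] [NormedAddCommGroup E]
    [InnerProductSpace 𝕜 E] [NormedAddCommGroup F] [InnerProductSpace 𝕜 F] {T : E →ₗ.[𝕜] E}
    (hT : T.IsFormalAdjoint T) (f : E →ₗᵢ[𝕜] F) :
    (T.transport f.toLinearMap f.injective).IsFormalAdjoint
      (T.transport f.toLinearMap f.injective) := by
  intro y z
  obtain ⟨a, ha⟩ := exists_eq_of_mem_domain_transport y.2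
  obtain ⟨b, hb⟩ := exists_eq_of_mem_domain_transport z.2
  rw [transport_apply a ha.symm, transport_apply b hb.symm, ← ha, ← hb]
  simp only [LinearIsometry.coe_toLinearMap, LinearIsometry.inner_map_map]
  exact hT a b

end Transport

section iSup

variable {R E F ι : Type*} [Ring R] [AddCommGroup E] [Module R E] [AddCommGroup F] [Module R F]
  {P : ι → E →ₗ.[R] F}

protected noncomputable def iSup (P : ι → E →ₗ.[R] F) (hP : Directed (· ≤ ·) P) :
    E →ₗ.[R] F :=
  LinearPMap.sSup (Set.range P) hP.directedOn_range

theorem directed_domain (hP : Directed (· ≤ ·) P) : Directed (· ≤ ·) fun i => (P i).domain :=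
  hP.mono_comp _ fun _ _ h => h.1

variable (hP : Directed (· ≤ ·) P)

theorem domain_iSup : (LinearPMap.iSup P hP).domain = ⨆ i, (P i).domain := by
  rw [LinearPMap.iSup, domain_sSup, ← Set.range_comp, sSup_range]
  rfl

protected theorem le_iSup (i : ι) : P i ≤ LinearPMap.iSup P hP :=
  LinearPMap.le_sSup _ (Set.mem_range_self i)

theorem exists_mem_domain_of_mem_domain_iSup [Nonempty ι] {x : E}
    (hx : x ∈ (LinearPMap.iSup P hP).domain) : ∃ i, x ∈ (P i).domain := by
  rwa [domain_iSup, Submodule.mem_iSup_of_directed _ (directed_domain hP)] at hx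

end iSup

theorem IsFormalAdjoint.iSup {𝕜 E ι : Type*} [RCLike 𝕜] [NormedAddCommGroup E]
    [InnerProductSpace 𝕜 E] [Nonempty ι] {P : ι → E →ₗ.[𝕜] E} (hP : Directed (· ≤ ·) P)
    (h : ∀ i, (P i).IsFormalAdjoint (P i)) :
    (LinearPMap.iSup P hP).IsFormalAdjoint (LinearPMap.iSup P hP) := by
  intro x y
  obtain ⟨i, hxi⟩ := exists_mem_domain_of_mem_domain_iSup hP x.2
  obtain ⟨j, hyj⟩ := exists_mem_domain_of_mem_domain_iSup hP y.2
  obtain ⟨k, hik, hjk⟩ := hP i j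
  have hx : P k ⟨x, hik.1 hxi⟩ = LinearPMap.iSup P hP x := (LinearPMap.le_iSup hP k).2 rfl
  have hy : P k ⟨y, hjk.1 hyj⟩ = LinearPMap.iSup P hP y := (LinearPMap.le_iSup hP k).2 rfl
  rw [← hx, ← hy]
  exact h k ⟨x, _⟩ ⟨y, _⟩

variable {E : Type*} [NormedAddCommGroup E] [InnerProductSpace ℂ E]

theorem IsFormalAdjoint.im_inner_apply_self {T : E →ₗ.[ℂ] E} (hT : T.IsFormalAdjoint T)
    (x : T.domain) : (⟪T x, (x : E)⟫_ℂ).im = 0 :=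
  Complex.conj_eq_iff_im.mp (by rw [inner_conj_symm]; exact (hT x x).symm)

theorem IsFormalAdjoint.eq_zero_of_apply_eq_smul {T : E →ₗ.[ℂ] E} (hT : T.IsFormalAdjoint T)
    {μ : ℂ} (hμ : μ.im ≠ 0) {x : T.domain} (hx : T x = μ • (x : E)) : x = 0 := by
  have him := hT.im_inner_apply_self x
  rw [hx, inner_smul_left, inner_self_eq_norm_sq_to_K] at him
  simp only [Complex.coe_algebraMap, ← Complex.ofReal_pow, Complex.im_mul_ofReal,
    Complex.conj_im, neg_mul, neg_eq_zero, mul_eq_zero] at him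
  exact Submodule.coe_eq_zero.mp <| norm_eq_zero.mp <|
    pow_eq_zero_iff two_ne_zero |>.mp <| him.resolve_left hμ

theorem IsFormalAdjoint.norm_apply_add_smul_sq {T : E →ₗ.[ℂ] E} (hT : T.IsFormalAdjoint T)
    {c : ℂ} (hc : c.re = 0) (x : T.domain) :
    ‖T x + c • (x : E)‖ ^ 2 = ‖T x‖ ^ 2 + ‖c‖ ^ 2 * ‖(x : E)‖ ^ 2 := by
  have hre : RCLike.re ⟪T x, c • (x : E)⟫_ℂ = 0 := by
    simp [hc, hT.im_inner_apply_self x]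
  rw [norm_add_sq (𝕜 := ℂ), hre, norm_smul, mul_pow]
  ring

theorem IsFormalAdjoint.closure {T : E →ₗ.[ℂ] E} (hT : T.IsFormalAdjoint T)
    (hcl : T.IsClosable) : T.closure.IsFormalAdjoint T.closure := by
  set ω : (E × E) × (E × E) → ℂ := fun pq => ⟪pq.1.2, pq.2.1⟫_ℂ - ⟪pq.1.1, pq.2.2⟫_ℂ
  have hω : Continuous ω := by fun_prop
  have hgraph : Set.EqOn ω 0 ((T.graph : Set (E × E)) ×ˢ T.graph) := by
    intro pq hpq
    obtain ⟨x, hx₁, hx₂⟩ := T.mem_graph_iff.mp hpq.1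
    obtain ⟨y, hy₁, hy₂⟩ := T.mem_graph_iff.mp hpq.2
    change ⟪pq.1.2, pq.2.1⟫_ℂ - ⟪pq.1.1, pq.2.2⟫_ℂ = 0
    rw [← hx₁, ← hx₂, ← hy₁, ← hy₂, hT x y, sub_self]
  have hclosure := hgraph.closure hω continuous_const
  rw [closure_prod_eq, ← Submodule.topologicalClosure_coe,
    hcl.graph_closure_eq_closure_graph] at hclosure
  intro x y
  exact sub_eq_zero.mp <| @hclosure (((x : E), T.closure x), ((y : E), T.closure y))
    ⟨T.closure.mem_graph x, T.closure.mem_graph y⟩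

theorem IsFormalAdjoint.max_norm_le_norm_apply_add_smul {T : E →ₗ.[ℂ] E}
    (hT : T.IsFormalAdjoint T) {c : ℂ} (hc : c.re = 0) (hc0 : c ≠ 0) (x : T.domain) :
    max ‖(x : E)‖ ‖T x‖ ≤ max 1 ‖c‖⁻¹ * ‖T x + c • (x : E)‖ := by
  have hsq := hT.norm_apply_add_smul_sq hc x
  have hTx : ‖T x‖ ≤ ‖T x + c • (x : E)‖ :=
    (sq_le_sq₀ (norm_nonneg _) (norm_nonneg _)).mp <| by
      rw [hsq]; exact le_add_of_nonneg_right (by positivity)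
  have hcx : ‖c‖ * ‖(x : E)‖ ≤ ‖T x + c • (x : E)‖ :=
    (sq_le_sq₀ (by positivity) (norm_nonneg _)).mp <| by
      rw [hsq, mul_pow]; exact le_add_of_nonneg_left (by positivity)
  rw [← le_inv_mul_iff₀ (norm_pos_iff.mpr hc0)] at hcx
  refine max_le (hcx.trans ?_) (hTx.trans ?_)
  · exact mul_le_mul_of_nonneg_right (le_max_right _ _) (norm_nonneg _)
  · exact le_mul_of_one_le_left (norm_nonneg _) (le_max_left _ _)

variable [CompleteSpace E]

theorem IsFormalAdjoint.isClosable {T : E →ₗ.[ℂ] E} (hT : T.IsFormalAdjoint T)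
    (hd : Dense (T.domain : Set E)) : T.IsClosable :=
  (adjoint_isClosed hd).isClosable.leIsClosable (hT.le_adjoint hd)

theorem _root_.IsSelfAdjoint.isFormalAdjoint {A : E →ₗ.[ℂ] E} (hA : IsSelfAdjoint A) :
    A.IsFormalAdjoint A := by
  simpa only [isSelfAdjoint_def.mp hA] using adjoint_isFormalAdjoint hA.dense_domain

theorem mem_orthogonal_rangeAddSMul_iff {T : E →ₗ.[ℂ] E} (hd : Dense (T.domain : Set E))
    {c : ℂ} {v : E} :
    v ∈ (T.rangeAddSMul c)ᗮ ↔ ∃ hv : v ∈ T†.domain, T† ⟨v, hv⟩ = -(conj c • v) := by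
  have hinner : ∀ u : T.domain,
      ⟪v, T u + c • (u : E)⟫_ℂ = ⟪v, T u⟫_ℂ - ⟪-(conj c • v), (u : E)⟫_ℂ := by
    intro u
    rw [inner_add_right, inner_smul_right, inner_neg_left, inner_smul_left, Complex.conj_conj]
    ring
  rw [Submodule.mem_orthogonal']
  constructor
  · intro h
    have hw : ∀ u : T.domain, ⟪-(conj c • v), (u : E)⟫_ℂ = ⟪v, T u⟫_ℂ := fun u =>
      (sub_eq_zero.mp ((hinner u).symm.trans (h _ ⟨u, rfl⟩))).symm
    exact ⟨mem_adjoint_domain_of_exists _ ⟨_, hw⟩, adjoint_apply_eq hd _ hw⟩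
  · rintro ⟨hv, hTv⟩ _ ⟨u, rfl⟩
    rw [← hTv] at hinner
    exact (hinner u).trans (by rw [adjoint_isFormalAdjoint hd ⟨v, hv⟩ u, sub_self])

theorem IsFormalAdjoint.isClosed_rangeAddSMul {T : E →ₗ.[ℂ] E} (hT : T.IsFormalAdjoint T)
    (hcl : T.IsClosed) {c : ℂ} (hc : c.re = 0) (hc0 : c ≠ 0) :
    _root_.IsClosed (T.rangeAddSMul c : Set E) := by
  have : CompleteSpace T.graph := hcl.completeSpace_coe
  let Φ : T.graph →L[ℂ] E :=
    (ContinuousLinearMap.snd ℂ E E + c • ContinuousLinearMap.fst ℂ E E).comp T.graph.subtypeL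
  have hrange : Set.range Φ = T.rangeAddSMul c := by
    ext y
    constructor
    · rintro ⟨⟨p, hp⟩, rfl⟩
      obtain ⟨x, hx₁, hx₂⟩ := T.mem_graph_iff.mp hp
      exact ⟨x, by simp [Φ, ← hx₁, ← hx₂]⟩
    · rintro ⟨x, rfl⟩
      exact ⟨⟨_, T.mem_graph x⟩, rfl⟩
  have hbound : ∀ p : T.graph, ‖p‖ ≤ (max 1 ‖c‖₊⁻¹ : NNReal) * ‖Φ p‖ := by
    rintro ⟨p, hp⟩
    obtain ⟨x, hx₁, hx₂⟩ := T.mem_graph_iff.mp hp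
    change ‖p‖ ≤ _ * ‖p.2 + c • p.1‖
    rw [Prod.norm_def, ← hx₁, ← hx₂]
    push_cast
    exact hT.max_norm_le_norm_apply_add_smul hc hc0 x
  rw [← hrange]
  exact (Φ.antilipschitz_of_bound hbound).isClosed_range Φ.uniformContinuous

theorem IsFormalAdjoint.rangeAddSMul_eq_top {T : E →ₗ.[ℂ] E} (hT : T.IsFormalAdjoint T)
    (hcl : T.IsClosed) {c : ℂ} (hc : c.re = 0) (hc0 : c ≠ 0)
    (hdense : Dense (T.rangeAddSMul c : Set E)) : T.rangeAddSMul c = ⊤ := by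
  rw [← (hT.isClosed_rangeAddSMul hcl hc hc0).submodule_topologicalClosure_eq]
  exact Submodule.dense_iff_topologicalClosure_eq_top.mp hdense

theorem _root_.IsSelfAdjoint.rangeAddSMul_eq_top {A : E →ₗ.[ℂ] E} (hA : IsSelfAdjoint A)
    {c : ℂ} (hc : c.re = 0) (hc0 : c ≠ 0) : A.rangeAddSMul c = ⊤ := by
  refine hA.isFormalAdjoint.rangeAddSMul_eq_top hA.isClosed hc hc0 ?_
  rw [Submodule.dense_iff_topologicalClosure_eq_top, Submodule.topologicalClosure_eq_top_iff,
    Submodule.eq_bot_iff]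
  -- a vector orthogonal to `ran (A + c)` is an eigenvector of `A† = A` for the non-real `-conj c`
  intro v hv
  obtain ⟨hvA, hAv⟩ := (mem_orthogonal_rangeAddSMul_iff hA.dense_domain).mp hv
  have hsym : A†.IsFormalAdjoint A† := by rw [isSelfAdjoint_def.mp hA]; exact hA.isFormalAdjoint
  have him : (-conj c).im ≠ 0 := by simpa using fun h => hc0 (Complex.ext hc h)
  rw [← neg_smul] at hAv
  exact Submodule.coe_eq_zero.mpr (hsym.eq_zero_of_apply_eq_smul him hAv)

theorem IsFormalAdjoint.isSelfAdjoint {S : E →ₗ.[ℂ] E} (hS : S.IsFormalAdjoint S)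
    (hd : Dense (S.domain : Set E)) (hcl : S.IsClosed)
    (h_add_I : Dense (S.rangeAddSMul Complex.I : Set E))
    (h_sub_I : Dense (S.rangeAddSMul (-Complex.I) : Set E)) : IsSelfAdjoint S := by
  have hle : S ≤ S† := hS.le_adjoint hd
  refine isSelfAdjoint_def.mpr (eq_of_le_of_domain_eq hle (le_antisymm hle.1 fun v hv => ?_)).symm
  have hsurj := hS.rangeAddSMul_eq_top hcl Complex.I_re Complex.I_ne_zero h_add_I
  obtain ⟨u, hu⟩ :=
    mem_rangeAddSMul.mp (hsurj ▸ Submodule.mem_top (x := S† ⟨v, hv⟩ + Complex.I • v))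
  have hw : v - u ∈ (S.rangeAddSMul (-Complex.I))ᗮ := by
    refine (mem_orthogonal_rangeAddSMul_iff hd).mpr ⟨S†.domain.sub_mem hv (hle.1 u.2), ?_⟩
    have hSu : S† ⟨u, hle.1 u.2⟩ = S u := (hle.2 rfl).symm
    calc S† ⟨v - u, _⟩ = S† ⟨v, hv⟩ - S u := by
          rw [show (⟨v - u, _⟩ : S†.domain) = ⟨v, hv⟩ - ⟨u, hle.1 u.2⟩ from rfl, map_sub, hSu]
      _ = -(conj (-Complex.I) • (v - u)) := by
          rw [eq_sub_of_add_eq hu.symm, _root_.map_neg, Complex.conj_I, neg_neg]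
          module
  -- `v - u` lies in `ker (S† + i) = (ran (S - i))ᗮ`, and `ran (S - i)` is everything.
  rw [hS.rangeAddSMul_eq_top hcl (by simp) (neg_ne_zero.mpr Complex.I_ne_zero) h_sub_I,
    Submodule.top_orthogonal_eq_bot, Submodule.mem_bot, sub_eq_zero] at hw
  exact hw ▸ u.2

theorem IsFormalAdjoint.isSelfAdjoint_closure {T : E →ₗ.[ℂ] E} (hT : T.IsFormalAdjoint T)
    (hd : Dense (T.domain : Set E)) (h_add_I : Dense (T.rangeAddSMul Complex.I : Set E))
    (h_sub_I : Dense (T.rangeAddSMul (-Complex.I) : Set E)) : IsSelfAdjoint T.closure :=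
  have hcl := hT.isClosable hd
  (hT.closure hcl).isSelfAdjoint (hd.mono T.le_closure.1) hcl.closure_isClosed
    (h_add_I.mono (rangeAddSMul_mono T.le_closure _))
    (h_sub_I.mono (rangeAddSMul_mono T.le_closure _))

end LinearPMap

open LinearPMap

theorem stmt0_general
    (H : ℕ → Type*) [∀ j, NormedAddCommGroup (H j)] [∀ j, InnerProductSpace ℂ (H j)]
    [∀ j, CompleteSpace (H j)]
    (Hlim : Type*) [NormedAddCommGroup Hlim] [InnerProductSpace ℂ Hlim] [CompleteSpace Hlim]
    (I : ∀ j k : ℕ, j ≤ k → H j →ₗᵢ[ℂ] H k) (J : ∀ j : ℕ, H j →ₗᵢ[ℂ] Hlim)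
    (hJ : ∀ (j k : ℕ) (hjk : j ≤ k) (ξ : H j), J k (I j k hjk ξ) = J j ξ)
    (hdense : Dense (⋃ j, Set.range (J j)))
    (D : ∀ j, H j →ₗ.[ℂ] H j)
    (hDsa : ∀ j, IsSelfAdjoint (D j))
    (hDcompat : ∀ (j k : ℕ) (hjk : j ≤ k) (ξ : (D j).domain),
      ∃ h : I j k hjk ξ ∈ (D k).domain, (D k) ⟨I j k hjk ξ, h⟩ = I j k hjk ((D j) ξ)) :
    ∃ D₀ : Hlim →ₗ.[ℂ] Hlim,
      (D₀.domain : Set Hlim) = ⋃ j, (J j) '' ((D j).domain : Set (H j)) ∧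
      (∀ (j : ℕ) (ξ : (D j).domain) (h : J j ξ ∈ D₀.domain), D₀ ⟨J j ξ, h⟩ = J j ((D j) ξ)) ∧
      Dense (D₀.domain : Set Hlim) ∧
      (∀ x y : D₀.domain, ⟪D₀ x, (y : Hlim)⟫_ℂ = ⟪(x : Hlim), D₀ y⟫_ℂ) ∧
      D₀.IsClosable ∧ IsSelfAdjoint D₀.closure := by
  set P := fun j => (D j).transport (J j).toLinearMap (J j).injective
  have hP : Monotone P := fun j k hjk =>
    transport_le_transport (i := (I j k hjk).toLinearMap) (hJ j k hjk) (hDcompat j k hjk)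
  set D₀ := LinearPMap.iSup P hP.directed_le
  have hdom : (D₀.domain : Set Hlim) = ⋃ j, (J j) '' ((D j).domain : Set (H j)) := by
    rw [domain_iSup, Submodule.coe_iSup_of_directed _ (directed_domain hP.directed_le)]
    rfl
  have hdense_dom : Dense (D₀.domain : Set Hlim) :=
    hdom ▸ hdense.iUnion_image (fun j => (J j).continuous) fun j => (hDsa j).dense_domain
  have hsym : D₀.IsFormalAdjoint D₀ :=
    IsFormalAdjoint.iSup _ fun j => (hDsa j).isFormalAdjoint.transport (J j)
  have hrange : ∀ c : ℂ, c.re = 0 → c ≠ 0 → Dense (D₀.rangeAddSMul c : Set Hlim) := by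
    refine fun c hc hc0 => hdense.mono (Set.iUnion_subset fun j => ?_)
    rintro _ ⟨ξ, rfl⟩
    refine rangeAddSMul_mono (LinearPMap.le_iSup _ j) c ?_
    rw [rangeAddSMul_transport, (hDsa j).rangeAddSMul_eq_top hc hc0]
    exact ⟨ξ, trivial, rfl⟩
  refine ⟨D₀, hdom, fun j ξ h => ?_, hdense_dom, hsym, hsym.isClosable hdense_dom,
    hsym.isSelfAdjoint_closure hdense_dom (hrange _ Complex.I_re Complex.I_ne_zero)
      (hrange _ (by simp) (neg_ne_zero.mpr Complex.I_ne_zero))⟩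
  have hξ : J j ξ ∈ (P j).domain := ⟨ξ, ξ.2, rfl⟩
  exact ((LinearPMap.le_iSup _ j).2 (x := ⟨_, hξ⟩) rfl).symm.trans (transport_apply ξ rfl)

/-- The inductive limit operator `D₀` of a countable inductive system of
densely defined self-adjoint operators is well defined (it exists as a `LinearPMap` with
domain `⋃ j, I_j (Dom D_j)` acting by `D₀ (I_j ξ) = I_j (D_j ξ)`), densely defined,
symmetric and essentially self-adjoint: its closure is self-adjoint. -/
theorem stmt0
    (H : ℕ → Type*) [∀ j, NormedAddCommGroup (H j)] [∀ j, InnerProductSpace ℂ (H j)]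
    [∀ j, CompleteSpace (H j)]
    (Hlim : Type*) [NormedAddCommGroup Hlim] [InnerProductSpace ℂ Hlim] [CompleteSpace Hlim]
    (I : ∀ j k : ℕ, j ≤ k → H j →ₗᵢ[ℂ] H k) (J : ∀ j : ℕ, H j →ₗᵢ[ℂ] Hlim)
    (hI : ∀ (j k l : ℕ) (hjk : j ≤ k) (hkl : k ≤ l) (ξ : H j),
      I k l hkl (I j k hjk ξ) = I j l (hjk.trans hkl) ξ)
    (hJ : ∀ (j k : ℕ) (hjk : j ≤ k) (ξ : H j), J k (I j k hjk ξ) = J j ξ)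
    (hdense : Dense (⋃ j, Set.range (J j)))
    (D : ∀ j, H j →ₗ.[ℂ] H j)
    (hDdense : ∀ j, Dense ((D j).domain : Set (H j)))
    (hDsa : ∀ j, IsSelfAdjoint (D j))
    (hDcompat : ∀ (j k : ℕ) (hjk : j ≤ k) (ξ : (D j).domain),
      ∃ h : I j k hjk ξ ∈ (D k).domain, (D k) ⟨I j k hjk ξ, h⟩ = I j k hjk ((D j) ξ)) :
    ∃ D₀ : Hlim →ₗ.[ℂ] Hlim,
      (D₀.domain : Set Hlim) = ⋃ j, (J j) '' ((D j).domain : Set (H j)) ∧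
      (∀ (j : ℕ) (ξ : (D j).domain) (h : J j ξ ∈ D₀.domain), D₀ ⟨J j ξ, h⟩ = J j ((D j) ξ)) ∧
      Dense (D₀.domain : Set Hlim) ∧
      (∀ x y : D₀.domain, ⟪D₀ x, (y : Hlim)⟫_ℂ = ⟪(x : Hlim), D₀ y⟫_ℂ) ∧
      D₀.IsClosable ∧ IsSelfAdjoint D₀.closure :=
  stmt0_general H Hlim I J hJ hdense D hDsa hDcompat
end

section
/- Let D be the closure of the inductive limit operator of a countable inductive system of densely defined self-adjoint operators D_j, and let λ ∈ ℂ \ ℝ. Then for every j, I_j ∘ R_λ(D_j) ∘ I_j* = P_j ∘ R_λ(D) ∘ P_j as bounded operators on H, and the sequence (P_j R_λ(D) P_j)_{j∈ℕ} converges to R_λ(D) in the strong operator topology (pointwise in norm on H). -/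
/-!
`P_j` is the orthogonal projection onto the range of the isometry `J_j`, so `P_j = J_j J_j*`.
Since `J_j` carries `D_j` into the closure of `D₀`, the resolvent identity gives
`R_λ(D) J_j = J_j R_λ(D_j)`, and conjugating by `J_j J_j*` yields the first claim. The ranges
of the `J_j` increase and have dense union, so `P_j → 1` strongly; together with `‖P_j‖ ≤ 1`
this gives `P_j R_λ(D) P_j → R_λ(D)` strongly.
-/

open scoped InnerProductSpace
open Filter Topology

/-- `R` is the resolvent of the (unbounded) operator `T` at `lam`. -/
def IsResolvent {K : Type*} [NormedAddCommGroup K] [InnerProductSpace ℂ K]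
    (T : K →ₗ.[ℂ] K) (lam : ℂ) (R : K →L[ℂ] K) : Prop :=
  (∀ y : K, ∃ h : R y ∈ T.domain, T ⟨R y, h⟩ - lam • R y = y) ∧
  ∀ x : T.domain, R (T x - lam • (x : K)) = x

open ContinuousLinearMap
open scoped InnerProduct

section Projections

variable {𝕜 E F : Type*} [RCLike 𝕜]
  [NormedAddCommGroup E] [InnerProductSpace 𝕜 E] [CompleteSpace E]
  [NormedAddCommGroup F] [InnerProductSpace 𝕜 F] [CompleteSpace F]

@[simp]
theorem LinearIsometry.adjoint_apply_self (J : E →ₗᵢ[𝕜] F) (ξ : E) :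
    adjoint J.toContinuousLinearMap (J ξ) = ξ :=
  DFunLike.congr_fun J.adjoint_comp_self ξ

theorem LinearIsometry.isStarProjection_comp_adjoint (J : E →ₗᵢ[𝕜] F) :
    IsStarProjection (J.toContinuousLinearMap ∘L J.toContinuousLinearMap†) := by
  refine ⟨?_, (isPositive_self_comp_adjoint _).isSelfAdjoint⟩
  ext x
  simp

theorem LinearIsometry.range_comp_adjoint (J : E →ₗᵢ[𝕜] F) :
    Set.range (J.toContinuousLinearMap ∘L J.toContinuousLinearMap†) = Set.range J := by
  refine Set.Subset.antisymm (fun _ ⟨y, hy⟩ => ⟨_, hy⟩) ?_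
  rintro _ ⟨ξ, rfl⟩
  exact ⟨J ξ, by simp⟩

theorem IsStarProjection.eq_comp_adjoint_of_range_eq {P : F →L[𝕜] F} (hP : IsStarProjection P)
    (J : E →ₗᵢ[𝕜] F) (hrange : Set.range P = Set.range J) :
    P = J.toContinuousLinearMap ∘L J.toContinuousLinearMap† := by
  refine hP.ext J.isStarProjection_comp_adjoint (SetLike.coe_injective ?_)
  simp only [LinearMap.coe_range, coe_coe, hrange, J.range_comp_adjoint]

theorem IsStarProjection.tendsto_apply_self {ι : Type*} [Preorder ι] {P : ι → E →L[𝕜] E}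
    (hP : ∀ i, IsStarProjection (P i)) (hmono : Monotone fun i => Set.range (P i))
    (hdense : Dense (⋃ i, Set.range (P i))) (x : E) :
    Tendsto (fun i => P i x) atTop (𝓝 x) := by
  choose _ hPeq using fun i => isStarProjection_iff_eq_starProjection_range.mp (hP i)
  have hU : Monotone fun i => (P i).range := fun i j hij => by
    simpa only [← SetLike.coe_subset_coe, LinearMap.coe_range, coe_coe] using hmono hij
  have hU' : ⊤ ≤ (⨆ i, (P i).range).topologicalClosure := by
    refine (Submodule.dense_iff_topologicalClosure_eq_top.mp (hdense.mono ?_)).ge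
    refine Set.iUnion_subset fun i => ?_
    simpa only [LinearMap.coe_range, coe_coe] using
      SetLike.coe_subset_coe.mpr (le_iSup (fun i => (P i).range) i)
  simpa only [← hPeq] using Submodule.starProjection_tendsto_self _ hU x hU'

end Projections

theorem tendsto_apply_of_tendsto_of_norm_le {ι 𝕜 E F : Type*} [NontriviallyNormedField 𝕜]
    [SeminormedAddCommGroup E] [NormedSpace 𝕜 E] [SeminormedAddCommGroup F] [NormedSpace 𝕜 F]
    {l : Filter ι} {P : ι → E →L[𝕜] F} {C : ℝ} (hC : ∀ i, ‖P i‖ ≤ C) {y : ι → E} {y₀ : E}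
    {z : F} (hy : Tendsto y l (𝓝 y₀)) (hz : Tendsto (fun i => P i y₀) l (𝓝 z)) :
    Tendsto (fun i => P i (y i)) l (𝓝 z) := by
  have hsmall : Tendsto (fun i => P i (y i - y₀)) l (𝓝 0) := by
    refine squeeze_zero_norm (fun i => ((P i).le_opNorm _).trans ?_)
      (by simpa using (tendsto_iff_norm_sub_tendsto_zero.mp hy).const_mul C)
    exact mul_le_mul_of_nonneg_right (hC i) (norm_nonneg _)
  simpa using hsmall.add hz

theorem IsResolvent.comp_eq_comp_of_intertwining {E K : Type*}
    [NormedAddCommGroup E] [InnerProductSpace ℂ E] [NormedAddCommGroup K] [InnerProductSpace ℂ K]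
    {S : E →ₗ.[ℂ] E} {T : K →ₗ.[ℂ] K} {lam : ℂ}
    {RS : E →L[ℂ] E} {RT : K →L[ℂ] K} (hS : IsResolvent S lam RS) (hT : IsResolvent T lam RT)
    (J : E →L[ℂ] K) (hJ : ∀ x : S.domain, ∃ h : J x ∈ T.domain, T ⟨J x, h⟩ = J (S x)) :
    RT ∘L J = J ∘L RS := by
  ext y
  obtain ⟨hmem, hy⟩ := hS.1 y
  obtain ⟨hJmem, hJS⟩ := hJ ⟨RS y, hmem⟩
  have := hT.2 ⟨J (RS y), hJmem⟩
  rw [hJS] at this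
  have hJy : J y = J (S ⟨RS y, hmem⟩) - lam • J (RS y) := by rw [← map_smul, ← map_sub, hy]
  rw [comp_apply, comp_apply, hJy]
  exact this

theorem stmt3_general
    (H : ℕ → Type*) [∀ j, NormedAddCommGroup (H j)] [∀ j, InnerProductSpace ℂ (H j)]
    [∀ j, CompleteSpace (H j)]
    (Hlim : Type*) [NormedAddCommGroup Hlim] [InnerProductSpace ℂ Hlim] [CompleteSpace Hlim]
    (I : ∀ j k : ℕ, j ≤ k → H j →ₗᵢ[ℂ] H k) (J : ∀ j : ℕ, H j →ₗᵢ[ℂ] Hlim)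
    (hJ : ∀ (j k : ℕ) (hjk : j ≤ k) (ξ : H j), J k (I j k hjk ξ) = J j ξ)
    (hdense : Dense (⋃ j, Set.range (J j)))
    (D : ∀ j, H j →ₗ.[ℂ] H j)
    (D₀ : Hlim →ₗ.[ℂ] Hlim)
    (hdom : (D₀.domain : Set Hlim) = ⋃ j, (J j) '' ((D j).domain : Set (H j)))
    (hact : ∀ (j : ℕ) (ξ : (D j).domain) (h : J j ξ ∈ D₀.domain), D₀ ⟨J j ξ, h⟩ = J j ((D j) ξ))
    (P : ℕ → Hlim →L[ℂ] Hlim)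
    (hP : ∀ j, IsSelfAdjoint (P j) ∧ IsIdempotentElem (P j) ∧
      Set.range (P j) = Set.range (J j))
    (lam : ℂ)
    (R : Hlim →L[ℂ] Hlim) (hR : IsResolvent D₀.closure lam R) :
    (∀ (j : ℕ) (Rj : H j →L[ℂ] H j), IsResolvent (D j) lam Rj →
      (J j).toContinuousLinearMap ∘L Rj ∘L
          ContinuousLinearMap.adjoint (J j).toContinuousLinearMap =
        P j ∘L R ∘L P j) ∧
    ∀ x : Hlim, Tendsto (fun j => (P j ∘L R ∘L P j) x) atTop (𝓝 (R x)) := by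
  have hPproj : ∀ j, IsStarProjection (P j) := fun j => ⟨(hP j).2.1, (hP j).1⟩
  refine ⟨fun j Rj hRj => ?_, fun x => ?_⟩
  · have hRJ : ∀ ξ, R (J j ξ) = J j (Rj ξ) := DFunLike.congr_fun <| by
      refine hRj.comp_eq_comp_of_intertwining hR (J j).toContinuousLinearMap fun ξ => ?_
      have hmem : J j ξ ∈ D₀.domain := by
        rw [← SetLike.mem_coe, hdom]
        exact Set.mem_iUnion.2 ⟨j, ξ, ξ.2, rfl⟩
      exact ⟨D₀.le_closure.1 hmem, (D₀.le_closure.2 rfl).symm.trans (hact j ξ hmem)⟩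
    ext y
    simp [(hPproj j).eq_comp_adjoint_of_range_eq (J j) (hP j).2.2, hRJ]
  · have hmono : Monotone fun j => Set.range (P j) := by
      intro j k hjk
      simp only [(hP _).2.2]
      rintro _ ⟨ξ, rfl⟩
      exact ⟨I j k hjk ξ, hJ j k hjk ξ⟩
    have hPlim := IsStarProjection.tendsto_apply_self hPproj hmono
      (by simpa only [(hP _).2.2] using hdense)
    exact tendsto_apply_of_tendsto_of_norm_le (fun j => (hPproj j).norm_le)
      ((R.continuous.tendsto x).comp (hPlim x)) (hPlim (R x))

/-- `I_j R_λ(D_j) I_j* = P_j R_λ(D) P_j`, and `P_j R_λ(D) P_j → R_λ(D)`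
in the strong operator topology. -/
theorem stmt3
    (H : ℕ → Type*) [∀ j, NormedAddCommGroup (H j)] [∀ j, InnerProductSpace ℂ (H j)]
    [∀ j, CompleteSpace (H j)]
    (Hlim : Type*) [NormedAddCommGroup Hlim] [InnerProductSpace ℂ Hlim] [CompleteSpace Hlim]
    (I : ∀ j k : ℕ, j ≤ k → H j →ₗᵢ[ℂ] H k) (J : ∀ j : ℕ, H j →ₗᵢ[ℂ] Hlim)
    (hI : ∀ (j k l : ℕ) (hjk : j ≤ k) (hkl : k ≤ l) (ξ : H j),
      I k l hkl (I j k hjk ξ) = I j l (hjk.trans hkl) ξ)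
    (hJ : ∀ (j k : ℕ) (hjk : j ≤ k) (ξ : H j), J k (I j k hjk ξ) = J j ξ)
    (hdense : Dense (⋃ j, Set.range (J j)))
    (D : ∀ j, H j →ₗ.[ℂ] H j)
    (hDdense : ∀ j, Dense ((D j).domain : Set (H j)))
    (hDsa : ∀ j, IsSelfAdjoint (D j))
    (hDcompat : ∀ (j k : ℕ) (hjk : j ≤ k) (ξ : (D j).domain),
      ∃ h : I j k hjk ξ ∈ (D k).domain, (D k) ⟨I j k hjk ξ, h⟩ = I j k hjk ((D j) ξ))
    (D₀ : Hlim →ₗ.[ℂ] Hlim)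
    (hdom : (D₀.domain : Set Hlim) = ⋃ j, (J j) '' ((D j).domain : Set (H j)))
    (hact : ∀ (j : ℕ) (ξ : (D j).domain) (h : J j ξ ∈ D₀.domain), D₀ ⟨J j ξ, h⟩ = J j ((D j) ξ))
    (P : ℕ → Hlim →L[ℂ] Hlim)
    (hP : ∀ j, IsSelfAdjoint (P j) ∧ IsIdempotentElem (P j) ∧
      Set.range (P j) = Set.range (J j))
    (lam : ℂ) (hlam : lam.im ≠ 0)
    (R : Hlim →L[ℂ] Hlim) (hR : IsResolvent D₀.closure lam R) :
    (∀ (j : ℕ) (Rj : H j →L[ℂ] H j), IsResolvent (D j) lam Rj →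
      (J j).toContinuousLinearMap ∘L Rj ∘L
          ContinuousLinearMap.adjoint (J j).toContinuousLinearMap =
        P j ∘L R ∘L P j) ∧
    ∀ x : Hlim, Tendsto (fun j => (P j ∘L R ∘L P j) x) atTop (𝓝 (R x)) :=
  stmt3_general H Hlim I J hJ hdense D D₀ hdom hact P hP lam R hR
end

section
/- Let D be a densely defined self-adjoint operator on a complex Hilbert space H and let (P_j)_{j∈ℕ} be orthogonal projections on H such that P_j(Dom D) ⊆ Dom D and D(P_jx) = P_j(Dx) for all x ∈ Dom D. If for some λ₀ ∈ ℂ \ ℝ one has ‖P_j R_{λ₀}(D) P_j − R_{λ₀}(D)‖ → 0, then for every λ ∈ ℂ \ ℝ one has ‖P_j R_λ(D) P_j − R_λ(D)‖ → 0. -/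
open Filter Topology

/-- If the projections `P_j` commute with the densely defined
self-adjoint operator `D` and `‖P_j R_{λ₀}(D) P_j − R_{λ₀}(D)‖ → 0` for some
`λ₀ ∈ ℂ \ ℝ`, then the same holds for every `λ ∈ ℂ \ ℝ`. -/
theorem stmt9
    (H : Type*) [NormedAddCommGroup H] [InnerProductSpace ℂ H] [CompleteSpace H]
    (D : H →ₗ.[ℂ] H) (hDdense : Dense (D.domain : Set H)) (hDsa : IsSelfAdjoint D)
    (P : ℕ → H →L[ℂ] H)
    (hPsa : ∀ j, IsSelfAdjoint (P j)) (hPidem : ∀ j, IsIdempotentElem (P j))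
    (hPcomm : ∀ (j : ℕ) (x : D.domain), ∃ h : P j x ∈ D.domain,
      D ⟨P j x, h⟩ = P j (D x))
    (lam₀ : ℂ) (hlam₀ : lam₀.im ≠ 0)
    (R₀ : H →L[ℂ] H) (hR₀ : IsResolvent D lam₀ R₀)
    (hconv₀ : Tendsto (fun j => ‖P j ∘L R₀ ∘L P j - R₀‖) atTop (𝓝 0)) :
    ∀ (lam : ℂ), lam.im ≠ 0 → ∀ R : H →L[ℂ] H, IsResolvent D lam R →
      Tendsto (fun j => ‖P j ∘L R ∘L P j - R‖) atTop (𝓝 0) := by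
  intro lam hlam R hR
  -- projections are idempotent pointwise
  have hP2 : ∀ j z, P j (P j z) = P j z := by
    intro j z
    have := DFunLike.congr_fun (hPidem j) z
    simpa [ContinuousLinearMap.mul_apply] using this
  -- projections commute with any resolvent
  have comm : ∀ (lam' : ℂ) (R' : H →L[ℂ] H), IsResolvent D lam' R' →
      ∀ j y, R' (P j y) = P j (R' y) := by
    intro lam' R' hR' j y
    obtain ⟨hmem, heq⟩ := hR'.1 y
    obtain ⟨hmem', hD'⟩ := hPcomm j ⟨R' y, hmem⟩
    have key : D ⟨P j (R' y), hmem'⟩ - lam' • (P j (R' y)) = P j y := by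
      rw [hD']
      conv_rhs => rw [← heq]
      simp
    have h2 := hR'.2 ⟨P j (R' y), hmem'⟩
    simp only at h2
    rw [key] at h2
    exact h2
  -- resolvent identity : R y = R₀ y + (lam - lam₀) • R₀ (R y)
  have resid : ∀ y, R y = R₀ y + (lam - lam₀) • R₀ (R y) := by
    intro y
    obtain ⟨hmem, heq⟩ := hR.1 y
    have h2 := hR₀.2 ⟨R y, hmem⟩
    simp only at h2
    have hDval : D ⟨R y, hmem⟩ = y + lam • R y := by
      exact eq_add_of_sub_eq heq
    rw [hDval] at h2
    have : y + lam • R y - lam₀ • R y = y + (lam - lam₀) • R y := by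
      rw [sub_smul]; abel
    rw [this] at h2
    nth_rewrite 1 [← h2]
    rw [map_add, map_smul]
  -- factorization
  have factor : ∀ j, P j ∘L R ∘L P j - R =
      (P j ∘L R₀ ∘L P j - R₀) ∘L (ContinuousLinearMap.id ℂ H + (lam - lam₀) • R) := by
    intro j
    ext y
    simp only [ContinuousLinearMap.sub_apply, ContinuousLinearMap.comp_apply,
      ContinuousLinearMap.add_apply, ContinuousLinearMap.id_apply,
      ContinuousLinearMap.smul_apply]
    rw [comm lam R hR j y, hP2 j (R y)]
    rw [comm lam₀ R₀ hR₀ j (y + (lam - lam₀) • R y), hP2 j]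
    rw [show R₀ (y + (lam - lam₀) • R y) = R y by rw [map_add, map_smul, ← resid y]]
  have hbound : ∀ j, ‖P j ∘L R ∘L P j - R‖ ≤
      ‖P j ∘L R₀ ∘L P j - R₀‖ * ‖ContinuousLinearMap.id ℂ H + (lam - lam₀) • R‖ := by
    intro j
    rw [factor j]
    exact ContinuousLinearMap.opNorm_comp_le _ _
  have := hconv₀.mul_const ‖ContinuousLinearMap.id ℂ H + (lam - lam₀) • R‖
  rw [zero_mul] at this
  exact squeeze_zero (fun j => norm_nonneg _) hbound this
end

section
/- Let {(A_j, H_j, D_j)} be a countable inductive system of spectral triples with inductive realization (A, H, D). For every j, every a ∈ A_j^∞, every k ≥ j, and every ξ ∈ Dom D_k: π(φ_j(a))(I_kξ) ∈ 𝒟, and D(I_k(π_k(φ_{j,k}(a))ξ)) − π(φ_j(a))(I_k(D_kξ)) = I_k( D_k(π_k(φ_{j,k}(a))ξ) − π_k(φ_{j,k}(a))(D_kξ) ); in particular I_k* ∘ [D, π(φ_j(a))] ∘ I_k = [D_k, π_k(φ_{j,k}(a))] on Dom D_k. -/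
open Filter Topology

/-- `T` is a bounded operator that preserves the domain of `Dm` and has bounded
commutator with `Dm` (i.e. `T` comes from an element of the smooth subalgebra). -/
def BddCommutator {K : Type*} [NormedAddCommGroup K] [InnerProductSpace ℂ K]
    (Dm : K →ₗ.[ℂ] K) (T : K →L[ℂ] K) : Prop :=
  ∃ C : ℝ, ∀ ξ : Dm.domain, ∃ h : T ξ ∈ Dm.domain,
    ‖Dm ⟨T ξ, h⟩ - T (Dm ξ)‖ ≤ C * ‖ξ‖

lemma adjoint_isometry_comp {E F : Type*} [NormedAddCommGroup E] [InnerProductSpace ℂ E]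
    [NormedAddCommGroup F] [InnerProductSpace ℂ F] [CompleteSpace E] [CompleteSpace F]
    (f : E →ₗᵢ[ℂ] F) (v : E) :
    ContinuousLinearMap.adjoint f.toContinuousLinearMap (f v) = v := by
  apply ext_inner_right ℂ
  intro w
  rw [ContinuousLinearMap.adjoint_inner_left]
  simp [LinearIsometry.inner_map_map]

/-- For `a ∈ A_j^∞`, `k ≥ j` and `ξ ∈ Dom D_k`, the element
`π(φ_j(a))(I_k ξ)` lies in `𝒟`, the commutator identity
`D(I_k(π_k(φ_{j,k}(a))ξ)) − π(φ_j(a))(I_k(D_k ξ)) = I_k([D_k, π_k(φ_{j,k}(a))]ξ)` holds,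
and in particular `I_k* ∘ [D, π(φ_j(a))] ∘ I_k = [D_k, π_k(φ_{j,k}(a))]` on `Dom D_k`. -/
theorem stmt10
    (H : ℕ → Type*) [∀ j, NormedAddCommGroup (H j)] [∀ j, InnerProductSpace ℂ (H j)]
    [∀ j, CompleteSpace (H j)]
    (Hlim : Type*) [NormedAddCommGroup Hlim] [InnerProductSpace ℂ Hlim] [CompleteSpace Hlim]
    (I : ∀ j k : ℕ, j ≤ k → H j →ₗᵢ[ℂ] H k) (J : ∀ j : ℕ, H j →ₗᵢ[ℂ] Hlim)
    (hI : ∀ (j k l : ℕ) (hjk : j ≤ k) (hkl : k ≤ l) (ξ : H j),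
      I k l hkl (I j k hjk ξ) = I j l (hjk.trans hkl) ξ)
    (hJ : ∀ (j k : ℕ) (hjk : j ≤ k) (ξ : H j), J k (I j k hjk ξ) = J j ξ)
    (hdense : Dense (⋃ j, Set.range (J j)))
    (D : ∀ j, H j →ₗ.[ℂ] H j)
    (hDdense : ∀ j, Dense ((D j).domain : Set (H j)))
    (hDsa : ∀ j, IsSelfAdjoint (D j))
    (hDcompat : ∀ (j k : ℕ) (hjk : j ≤ k) (ξ : (D j).domain),
      ∃ h : I j k hjk ξ ∈ (D k).domain, (D k) ⟨I j k hjk ξ, h⟩ = I j k hjk ((D j) ξ))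
    (D₀ : Hlim →ₗ.[ℂ] Hlim)
    (hdom : (D₀.domain : Set Hlim) = ⋃ j, (J j) '' ((D j).domain : Set (H j)))
    (hact : ∀ (j : ℕ) (ξ : (D j).domain) (h : J j ξ ∈ D₀.domain), D₀ ⟨J j ξ, h⟩ = J j ((D j) ξ))
    (A : ℕ → Type*) [∀ j, NormedRing (A j)] [∀ j, StarRing (A j)] [∀ j, CStarRing (A j)]
    [∀ j, NormedAlgebra ℂ (A j)] [∀ j, StarModule ℂ (A j)] [∀ j, CompleteSpace (A j)]
    (φ : ∀ j k : ℕ, j ≤ k → A j →⋆ₐ[ℂ] A k)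
    (hφinj : ∀ (j k : ℕ) (hjk : j ≤ k), Function.Injective (φ j k hjk))
    (hφ : ∀ (j k l : ℕ) (hjk : j ≤ k) (hkl : k ≤ l) (a : A j),
      φ k l hkl (φ j k hjk a) = φ j l (hjk.trans hkl) a)
    (π : ∀ j, A j →⋆ₐ[ℂ] (H j →L[ℂ] H j))
    (hπinj : ∀ j, Function.Injective (π j))
    (hint : ∀ (j k : ℕ) (hjk : j ≤ k) (a : A j) (ξ : H j),
      I j k hjk (π j a ξ) = π k (φ j k hjk a) (I j k hjk ξ))
    (hsmooth : ∀ (j k : ℕ) (hjk : j ≤ k) (a : A j),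
      BddCommutator (D j) (π j a) → BddCommutator (D k) (π k (φ j k hjk a)))
    (Alim : Type*) [NormedRing Alim] [StarRing Alim] [CStarRing Alim]
    [NormedAlgebra ℂ Alim] [StarModule ℂ Alim] [CompleteSpace Alim]
    (φlim : ∀ j, A j →⋆ₐ[ℂ] Alim)
    (hφliminj : ∀ j, Function.Injective (φlim j))
    (hφlim : ∀ (j k : ℕ) (hjk : j ≤ k) (a : A j), φlim k (φ j k hjk a) = φlim j a)
    (hAdense : Dense (⋃ j, Set.range (φlim j)))
    (πlim : Alim →⋆ₐ[ℂ] (Hlim →L[ℂ] Hlim))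
    (hπlim : ∀ (j : ℕ) (a : A j) (ξ : H j), πlim (φlim j a) (J j ξ) = J j (π j a ξ))
    (j : ℕ) (a : A j) (ha : BddCommutator (D j) (π j a))
    (k : ℕ) (hjk : j ≤ k) (ξ : (D k).domain) :
    πlim (φlim j a) (J k ξ) ∈ ⋃ m, (J m) '' ((D m).domain : Set (H m)) ∧
    ∃ (h1 : π k (φ j k hjk a) (ξ : H k) ∈ (D k).domain)
      (h2 : J k (π k (φ j k hjk a) (ξ : H k)) ∈ D₀.closure.domain),
      (D₀.closure ⟨J k (π k (φ j k hjk a) (ξ : H k)), h2⟩ -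
          πlim (φlim j a) (J k ((D k) ξ)) =
        J k ((D k) ⟨π k (φ j k hjk a) (ξ : H k), h1⟩ -
          π k (φ j k hjk a) ((D k) ξ))) ∧
      ContinuousLinearMap.adjoint (J k).toContinuousLinearMap
          (D₀.closure ⟨J k (π k (φ j k hjk a) (ξ : H k)), h2⟩ -
            πlim (φlim j a) (J k ((D k) ξ))) =
        (D k) ⟨π k (φ j k hjk a) (ξ : H k), h1⟩ - π k (φ j k hjk a) ((D k) ξ) := by
  obtain ⟨C, hC⟩ := hsmooth j k hjk a ha
  obtain ⟨h1, -⟩ := hC ξ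
  set x : H k := π k (φ j k hjk a) (ξ : H k) with hx
  have hπx : πlim (φlim j a) (J k (ξ : H k)) = J k x := by
    rw [← hφlim j k hjk a, hπlim]
  have hπDx : πlim (φlim j a) (J k ((D k) ξ)) = J k (π k (φ j k hjk a) ((D k) ξ)) := by
    rw [← hφlim j k hjk a, hπlim]
  have hmem : J k x ∈ D₀.domain := by
    have : J k x ∈ (D₀.domain : Set Hlim) := by
      rw [hdom]; exact Set.mem_iUnion.2 ⟨k, ⟨x, h1, rfl⟩⟩
    exact this
  have h2 : J k x ∈ D₀.closure.domain := D₀.le_closure.1 hmem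
  have hval : D₀.closure ⟨J k x, h2⟩ = J k ((D k) ⟨x, h1⟩) := by
    rw [← D₀.le_closure.2 (x := ⟨J k x, hmem⟩) (y := ⟨J k x, h2⟩) rfl]
    exact hact k ⟨x, h1⟩ hmem
  refine ⟨?_, h1, h2, ?_, ?_⟩
  · rw [hπx]
    exact Set.mem_iUnion.2 ⟨k, ⟨x, h1, rfl⟩⟩
  · rw [hval, hπDx, ← LinearIsometry.map_sub]
  · rw [hval, hπDx, ← LinearIsometry.map_sub, adjoint_isometry_comp]
end

section
/- Let {(A_j, H_j, D_j)} be a countable inductive system of spectral triples with inductive realization (A, H, D). For every j, every self-adjoint a = a* ∈ A_j^∞, every k ≥ j, and every x ∈ 𝒟: P_k x ∈ 𝒟, π(φ_j(a))x ∈ 𝒟, and the commutator [D, π(φ_j(a))] commutes with P_k, i.e. D(π(φ_j(a))(P_kx)) − π(φ_j(a))(D(P_kx)) = P_k( D(π(φ_j(a))x) − π(φ_j(a))(Dx) ). -/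
open scoped InnerProductSpace

section SymmetricOperator

variable {K : Type*} [NormedAddCommGroup K] [InnerProductSpace ℂ K] {A : K →ₗ.[ℂ] K} {c : ℂ}

theorem LinearPMap.IsFormalAdjoint.norm_map_add_smul_sq (hA : A.IsFormalAdjoint A)
    (hc : c.re = 0) (ξ : A.domain) :
    ‖A ξ + c • (ξ : K)‖ ^ 2 = ‖A ξ‖ ^ 2 + ‖c‖ ^ 2 * ‖(ξ : K)‖ ^ 2 := by
  have him : (⟪A ξ, (ξ : K)⟫_ℂ).im = 0 := by
    rw [← Complex.conj_eq_iff_im, inner_conj_symm, hA ξ ξ]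
  have hre : RCLike.re ⟪A ξ, c • (ξ : K)⟫_ℂ = 0 := by
    simp [hc, him]
  rw [@norm_add_sq ℂ, hre, norm_smul]
  ring

theorem LinearPMap.IsFormalAdjoint.norm_smul_le_norm_map_add_smul (hA : A.IsFormalAdjoint A)
    (hc : c.re = 0) (ξ : A.domain) : ‖c‖ * ‖(ξ : K)‖ ≤ ‖A ξ + c • (ξ : K)‖ := by
  refine le_of_sq_le_sq ?_ (norm_nonneg _)
  rw [hA.norm_map_add_smul_sq hc, mul_pow]
  nlinarith [sq_nonneg ‖A ξ‖]

theorem LinearPMap.IsFormalAdjoint.norm_map_le_norm_map_add_smul (hA : A.IsFormalAdjoint A)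
    (hc : c.re = 0) (ξ : A.domain) : ‖A ξ‖ ≤ ‖A ξ + c • (ξ : K)‖ := by
  refine le_of_sq_le_sq ?_ (norm_nonneg _)
  rw [hA.norm_map_add_smul_sq hc]
  nlinarith [sq_nonneg (‖c‖ * ‖(ξ : K)‖)]

end SymmetricOperator

section SelfAdjointOperator

variable {K : Type*} [NormedAddCommGroup K] [InnerProductSpace ℂ K] [CompleteSpace K]
  {A : K →ₗ.[ℂ] K} {c : ℂ}

theorem IsSelfAdjoint.isFormalAdjoint_s11 (hA : IsSelfAdjoint A) : A.IsFormalAdjoint A := by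
  have h := LinearPMap.adjoint_isFormalAdjoint hA.dense_domain (T := A)
  rwa [LinearPMap.isSelfAdjoint_def.mp hA] at h

theorem IsSelfAdjoint.exists_apply_eq_of_inner (hA : IsSelfAdjoint A) {y w : K}
    (h : ∀ ξ : A.domain, ⟪w, (ξ : K)⟫_ℂ = ⟪y, A ξ⟫_ℂ) : ∃ hy : y ∈ A.domain, A ⟨y, hy⟩ = w := by
  have hy : y ∈ A.adjoint.domain := LinearPMap.mem_adjoint_domain_of_exists y ⟨w, h⟩
  have hle := (LinearPMap.isSelfAdjoint_def.mp hA).le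
  exact ⟨hle.1 hy, (hle.2 rfl).symm.trans (LinearPMap.adjoint_apply_eq hA.dense_domain ⟨y, hy⟩ h)⟩

theorem IsSelfAdjoint.eq_zero_of_inner_map_add_smul (hA : IsSelfAdjoint A) (hre : c.re = 0)
    (hc : c ≠ 0) {y : K} (hy : ∀ ξ : A.domain, ⟪y, A ξ + c • (ξ : K)⟫_ℂ = 0) : y = 0 := by
  obtain ⟨hy, hAy⟩ := hA.exists_apply_eq_of_inner (y := y) (w := -(starRingEnd ℂ c) • y)
    fun ξ => by
      have := hy ξ
      rw [inner_add_right, inner_smul_right] at this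
      rw [inner_smul_left, map_neg, Complex.conj_conj]
      linear_combination -this
  have hre' : (starRingEnd ℂ c).re = 0 := by simpa using hre
  have := hA.isFormalAdjoint_s11.norm_smul_le_norm_map_add_smul hre' ⟨y, hy⟩
  rw [hAy, Submodule.coe_mk, neg_smul, neg_add_cancel, norm_zero,
    ← mul_zero ‖starRingEnd ℂ c‖] at this
  exact norm_le_zero_iff.mp (le_of_mul_le_mul_left this (by simpa using hc))

theorem IsSelfAdjoint.exists_map_add_smul_eq (hA : IsSelfAdjoint A) (hre : c.re = 0)
    (hc : c ≠ 0) (μ : K) : ∃ ξ : A.domain, A ξ + c • (ξ : K) = μ := by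
  let f : A.graph →L[ℂ] K :=
    (ContinuousLinearMap.snd ℂ K K + c • ContinuousLinearMap.fst ℂ K K).comp A.graph.subtypeL
  have hf : ∀ ξ : A.domain, f ⟨((ξ : K), A ξ), A.mem_graph ξ⟩ = A ξ + c • (ξ : K) :=
    fun _ => rfl
  have : CompleteSpace A.graph := hA.isClosed.completeSpace_coe
  have hclosed : IsClosed (f.range : Set K) := by
    rw [LinearMap.coe_range, ContinuousLinearMap.coe_coe]
    refine (f.antilipschitz_of_bound (K := max 1 ‖c‖₊⁻¹) fun ⟨(x, y), hp⟩ => ?_).isClosed_range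
      f.uniformContinuous
    obtain ⟨ξ, rfl, rfl⟩ := A.mem_graph_iff.mp hp
    have hξ : ‖(ξ : K)‖ ≤ ‖c‖⁻¹ * ‖A ξ + c • (ξ : K)‖ := by
      rw [le_inv_mul_iff₀ (norm_pos_iff.mpr hc)]
      exact hA.isFormalAdjoint_s11.norm_smul_le_norm_map_add_smul hre ξ
    rw [Submodule.coe_norm, Prod.norm_def, hf, NNReal.coe_max, NNReal.coe_one, NNReal.coe_inv,
      coe_nnnorm]
    exact max_le (hξ.trans (by gcongr; exact le_max_right _ _))
      ((hA.isFormalAdjoint_s11.norm_map_le_norm_map_add_smul hre ξ).trans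
        (le_mul_of_one_le_left (norm_nonneg _) (le_max_left _ _)))
  have : CompleteSpace f.range := hclosed.completeSpace_coe
  have horth : f.rangeᗮ = ⊥ := (Submodule.eq_bot_iff _).2 fun y hy =>
    hA.eq_zero_of_inner_map_add_smul hre hc fun ξ => (hf ξ) ▸
      (Submodule.mem_orthogonal' _ _).mp hy _ (LinearMap.mem_range_self (f : A.graph →ₗ[ℂ] K) _)
  obtain ⟨⟨⟨x, y⟩, hp⟩, hpμ⟩ := LinearMap.mem_range.mp
    ((Submodule.orthogonal_eq_bot_iff.mp horth).symm ▸ Submodule.mem_top : μ ∈ f.range)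
  obtain ⟨ξ, rfl, rfl⟩ := A.mem_graph_iff.mp hp
  exact ⟨ξ, (hf ξ).symm.trans hpμ⟩

end SelfAdjointOperator

section ReducingSubspace

variable {𝕜 K L : Type*} [RCLike 𝕜] [NormedAddCommGroup K] [InnerProductSpace 𝕜 K]
  [NormedAddCommGroup L] [InnerProductSpace 𝕜 L]

instance LinearIsometry.hasOrthogonalProjection_range [CompleteSpace L] (U : L →ₗᵢ[𝕜] K) :
    (LinearMap.range U.toLinearMap).HasOrthogonalProjection :=
  have : CompleteSpace (LinearMap.range U.toLinearMap) :=
    completeSpace_coe_iff_isComplete.mpr <| by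
      rw [LinearMap.coe_range]; exact U.isometry.isUniformInducing.isComplete_range
  inferInstance

theorem IsSelfAdjoint.commute_starProjection [CompleteSpace K] {T : K →L[𝕜] K}
    (hT : IsSelfAdjoint T) {V : Submodule 𝕜 K} [V.HasOrthogonalProjection]
    (hV : Set.MapsTo T V V) : Commute T V.starProjection := by
  have hVperp : Set.MapsTo T Vᗮ Vᗮ := fun w hw => by
    rw [SetLike.mem_coe, Submodule.mem_orthogonal] at hw ⊢
    intro v hv
    have hsymm := hT.isSymmetric v w
    rw [ContinuousLinearMap.coe_coe] at hsymm
    exact hsymm ▸ hw _ (hV hv)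
  refine ContinuousLinearMap.ext fun z => ?_
  show T (V.starProjection z) = V.starProjection (T z)
  refine (Submodule.eq_starProjection_of_mem_orthogonal' (hV (V.starProjection_apply_mem z))
    (hVperp (V.sub_starProjection_mem_orthogonal z)) ?_).symm
  rw [← map_add, add_sub_cancel]

theorem IsStarProjection.apply_linearIsometry {M : Type*} [NormedAddCommGroup M]
    [InnerProductSpace 𝕜 M] [CompleteSpace M] {P : M →L[𝕜] M} (hP : IsStarProjection P)
    (W : K →ₗᵢ[𝕜] M) (V : Submodule 𝕜 K) [V.HasOrthogonalProjection]
    (hrange : Set.range P = W '' V) (z : K) : P (W z) = W (V.starProjection z) := by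
  obtain ⟨_, hPeq⟩ := isStarProjection_iff_eq_starProjection_range.mp hP
  have hWV : W (V.starProjection z) ∈ P.range := by
    rw [← SetLike.mem_coe, LinearMap.coe_range, ContinuousLinearMap.coe_coe, hrange]
    exact Set.mem_image_of_mem W (V.starProjection_apply_mem z)
  have hWVperp : W (z - V.starProjection z) ∈ P.rangeᗮ := by
    rw [Submodule.mem_orthogonal]
    intro u hu
    rw [← SetLike.mem_coe, LinearMap.coe_range, ContinuousLinearMap.coe_coe, hrange] at hu
    obtain ⟨v, hv, rfl⟩ := hu
    rw [LinearIsometry.inner_map_map]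
    exact (V.mem_orthogonal _).mp (V.sub_starProjection_mem_orthogonal z) v hv
  rw [hPeq]
  exact Submodule.eq_starProjection_of_mem_orthogonal' hWV hWVperp
    (by rw [← map_add, add_sub_cancel])

def Submodule.Reduces (V : Submodule 𝕜 K) [V.HasOrthogonalProjection] (A : K →ₗ.[𝕜] K) :
    Prop :=
  ∀ η : A.domain, ∃ h : V.starProjection η ∈ A.domain, A ⟨_, h⟩ = V.starProjection (A η)

theorem Submodule.Reduces.map_eq_starProjection {V : Submodule 𝕜 K} [V.HasOrthogonalProjection]
    {A : K →ₗ.[𝕜] K} (hV : V.Reduces A) {η ζ : A.domain} (hζ : (ζ : K) = V.starProjection η) :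
    A ζ = V.starProjection (A η) :=
  (congrArg A (Subtype.ext hζ)).trans (hV η).2

theorem Submodule.Reduces.commutator_starProjection {V : Submodule 𝕜 K}
    [V.HasOrthogonalProjection] {A : K →ₗ.[𝕜] K} (hV : V.Reduces A) {T : K →L[𝕜] K}
    (hT : Commute T V.starProjection) (hTA : ∀ ζ : A.domain, T ζ ∈ A.domain)
    {η η₁ : A.domain} (hη₁ : (η₁ : K) = V.starProjection η) :
    A ⟨T η₁, hTA η₁⟩ - T (A η₁) = V.starProjection (A ⟨T η, hTA η⟩ - T (A η)) := by
  have hTη₁ : T η₁ = V.starProjection (T η) := hη₁ ▸ DFunLike.congr_fun hT.eq (η : K)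
  rw [map_sub, hV.map_eq_starProjection (η := ⟨T η, hTA η⟩) hTη₁, hV.map_eq_starProjection hη₁]
  exact congrArg _ (DFunLike.congr_fun hT.eq (A η))

theorem Submodule.Reduces.closure_commutator_comm_of_intertwines {M : Type*}
    [NormedAddCommGroup M] [InnerProductSpace 𝕜 M] {B : K →ₗ.[𝕜] K} {A : M →ₗ.[𝕜] M}
    {V : Submodule 𝕜 K} [V.HasOrthogonalProjection] (hV : V.Reduces B) (W : K →ₗ[𝕜] M)
    (hW : ∀ ζ : B.domain, ∃ h : W ζ ∈ A.domain, A ⟨W ζ, h⟩ = W (B ζ))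
    {T : K →L[𝕜] K} (hT : Commute T V.starProjection) (hTB : ∀ ζ : B.domain, T ζ ∈ B.domain)
    {S P : M →L[𝕜] M} (hS : ∀ z, S (W z) = W (T z)) (hP : ∀ z, P (W z) = W (V.starProjection z))
    (ξ : B.domain) :
    P (W ξ) ∈ A.domain ∧ S (W ξ) ∈ A.domain ∧
    ∃ (h1 : S (P (W ξ)) ∈ A.closure.domain) (h2 : P (W ξ) ∈ A.closure.domain)
      (h3 : S (W ξ) ∈ A.closure.domain) (h4 : W ξ ∈ A.closure.domain),
      A.closure ⟨S (P (W ξ)), h1⟩ - S (A.closure ⟨P (W ξ), h2⟩) =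
        P (A.closure ⟨S (W ξ), h3⟩ - S (A.closure ⟨W ξ, h4⟩)) := by
  have hmem : ∀ ζ : B.domain, W ζ ∈ A.domain := fun ζ => (hW ζ).1
  have hAW : ∀ (y : M) (hy : y ∈ A.closure.domain) (ζ : B.domain), y = W ζ →
      A.closure ⟨y, hy⟩ = W (B ζ) := by
    rintro _ hy ζ rfl
    exact (A.le_closure.2 (x := ⟨_, hmem ζ⟩) rfl).symm.trans (hW ζ).2
  set ξ₁ : B.domain := ⟨V.starProjection ξ, (hV ξ).1⟩
  have hPξ : P (W ξ) = W ξ₁ := hP ξ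
  have hSPξ : S (P (W ξ)) = W (T ξ₁) := by rw [hPξ, hS]
  have hSξ : S (W ξ) = W (T ξ) := hS ξ
  refine ⟨hPξ ▸ hmem ξ₁, hSξ ▸ hmem ⟨_, hTB ξ⟩,
    hSPξ ▸ A.le_closure.1 (hmem ⟨_, hTB ξ₁⟩), hPξ ▸ A.le_closure.1 (hmem ξ₁),
    hSξ ▸ A.le_closure.1 (hmem ⟨_, hTB ξ⟩), A.le_closure.1 (hmem ξ), ?_⟩
  rw [hAW _ _ ⟨_, hTB ξ₁⟩ hSPξ, hAW _ _ ξ₁ hPξ, hAW _ _ ⟨_, hTB ξ⟩ hSξ, hAW _ _ ξ rfl, hS, hS,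
    ← map_sub, ← map_sub, hP]
  exact congrArg W (hV.commutator_starProjection hT hTB rfl)

end ReducingSubspace

open Complex in
theorem LinearPMap.IsFormalAdjoint.reduces_range {K L : Type*} [NormedAddCommGroup K]
    [InnerProductSpace ℂ K] [NormedAddCommGroup L] [InnerProductSpace ℂ L] [CompleteSpace L]
    {A : K →ₗ.[ℂ] K} {B : L →ₗ.[ℂ] L} (hA : A.IsFormalAdjoint A) (hB : IsSelfAdjoint B)
    (U : L →ₗᵢ[ℂ] K) (hU : ∀ ζ : B.domain, ∃ h : U ζ ∈ A.domain, A ⟨U ζ, h⟩ = U (B ζ)) :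
    (LinearMap.range U.toLinearMap).Reduces A := by
  set V := LinearMap.range U.toLinearMap
  have hsolve : ∀ c : ℂ, c.re = 0 → c ≠ 0 → ∀ v ∈ V,
      ∃ θ : A.domain, (θ : K) ∈ V ∧ A θ ∈ V ∧ A θ + c • (θ : K) = v := by
    rintro c hre hc _ ⟨ζ, rfl⟩
    obtain ⟨σ, hσ⟩ := hB.exists_map_add_smul_eq hre hc ζ
    obtain ⟨h, hAσ⟩ := hU σ
    refine ⟨⟨U σ, h⟩, ⟨σ, rfl⟩, hAσ ▸ ⟨B σ, rfl⟩, ?_⟩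
    rw [hAσ, ← hσ]
    show U (B σ) + c • U σ = U (B σ + c • σ)
    rw [U.map_add, U.map_smul]
  have horth : ∀ θ : A.domain, A θ + I • (θ : K) ∈ Vᗮ → (θ : K) ∈ Vᗮ := by
    intro θ hθ
    rw [Submodule.mem_orthogonal] at hθ ⊢
    intro v hv
    obtain ⟨τ, hτV, -, rfl⟩ := hsolve (-I) (by simp) (by simp) v hv
    have := hθ _ hτV
    rw [inner_add_right, inner_smul_right, ← hA τ θ] at this
    rw [inner_add_left, inner_smul_left]
    simpa using this
  intro η
  obtain ⟨θ, hθV, hAθV, hθ⟩ := hsolve I (by simp) I_ne_zero _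
    (V.starProjection_apply_mem (A η + I • (η : K)))
  have hrest : A (η - θ) + I • ((η - θ : A.domain) : K) ∈ Vᗮ := by
    have := V.sub_starProjection_mem_orthogonal (A η + I • (η : K))
    rwa [← hθ, add_sub_add_comm, ← smul_sub, ← LinearPMap.map_sub] at this
  have hproj : V.starProjection η = θ :=
    Submodule.eq_starProjection_of_mem_orthogonal hθV (horth _ hrest)
  have hAperp : A (η - θ) ∈ Vᗮ := by
    rw [← add_sub_cancel_right (A (η - θ)) (I • ((η - θ : A.domain) : K))]
    exact Vᗮ.sub_mem hrest (Vᗮ.smul_mem I (horth _ hrest))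
  refine ⟨hproj ▸ θ.2, ?_⟩
  exact (congrArg A (Subtype.ext hproj)).trans (Submodule.eq_starProjection_of_mem_orthogonal'
    hAθV hAperp (by rw [← LinearPMap.map_add, add_sub_cancel])).symm

theorem exists_le_mem_of_mem_iUnion_image {X : ℕ → Type*} {M : Type*}
    (I : ∀ j k : ℕ, j ≤ k → X j → X k) (J : ∀ j, X j → M)
    (hJ : ∀ (j k : ℕ) (hjk : j ≤ k) (ξ : X j), J k (I j k hjk ξ) = J j ξ)
    (S : ∀ j, Set (X j)) (hS : ∀ (j k : ℕ) (hjk : j ≤ k), Set.MapsTo (I j k hjk) (S j) (S k))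
    {y : M} (hy : y ∈ ⋃ j, J j '' S j) (k : ℕ) : ∃ n, k ≤ n ∧ ∃ ξ ∈ S n, J n ξ = y := by
  obtain ⟨m, ξ, hξ, rfl⟩ := Set.mem_iUnion.mp hy
  exact ⟨max m k, le_max_right m k, _, hS _ _ (le_max_left m k) hξ, hJ _ _ _ ξ⟩

theorem stmt11_general
    (H : ℕ → Type*) [∀ j, NormedAddCommGroup (H j)] [∀ j, InnerProductSpace ℂ (H j)]
    [∀ j, CompleteSpace (H j)]
    (Hlim : Type*) [NormedAddCommGroup Hlim] [InnerProductSpace ℂ Hlim] [CompleteSpace Hlim]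
    (I : ∀ j k : ℕ, j ≤ k → H j →ₗᵢ[ℂ] H k) (J : ∀ j : ℕ, H j →ₗᵢ[ℂ] Hlim)
    (hJ : ∀ (j k : ℕ) (hjk : j ≤ k) (ξ : H j), J k (I j k hjk ξ) = J j ξ)
    (D : ∀ j, H j →ₗ.[ℂ] H j)
    (hDsa : ∀ j, IsSelfAdjoint (D j))
    (hDcompat : ∀ (j k : ℕ) (hjk : j ≤ k) (ξ : (D j).domain),
      ∃ h : I j k hjk ξ ∈ (D k).domain, (D k) ⟨I j k hjk ξ, h⟩ = I j k hjk ((D j) ξ))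
    (D₀ : Hlim →ₗ.[ℂ] Hlim)
    (hdom : (D₀.domain : Set Hlim) = ⋃ j, (J j) '' ((D j).domain : Set (H j)))
    (hact : ∀ (j : ℕ) (ξ : (D j).domain) (h : J j ξ ∈ D₀.domain), D₀ ⟨J j ξ, h⟩ = J j ((D j) ξ))
    (A : ℕ → Type*) [∀ j, NormedRing (A j)] [∀ j, StarRing (A j)]
    [∀ j, NormedAlgebra ℂ (A j)]
    (φ : ∀ j k : ℕ, j ≤ k → A j →⋆ₐ[ℂ] A k)
    (hφ : ∀ (j k l : ℕ) (hjk : j ≤ k) (hkl : k ≤ l) (a : A j),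
      φ k l hkl (φ j k hjk a) = φ j l (hjk.trans hkl) a)
    (π : ∀ j, A j →⋆ₐ[ℂ] (H j →L[ℂ] H j))
    (hint : ∀ (j k : ℕ) (hjk : j ≤ k) (a : A j) (ξ : H j),
      I j k hjk (π j a ξ) = π k (φ j k hjk a) (I j k hjk ξ))
    (hsmooth : ∀ (j k : ℕ) (hjk : j ≤ k) (a : A j),
      BddCommutator (D j) (π j a) → BddCommutator (D k) (π k (φ j k hjk a)))
    (Alim : Type*) [NormedRing Alim] [StarRing Alim]
    [NormedAlgebra ℂ Alim]
    (φlim : ∀ j, A j →⋆ₐ[ℂ] Alim)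
    (hφlim : ∀ (j k : ℕ) (hjk : j ≤ k) (a : A j), φlim k (φ j k hjk a) = φlim j a)
    (πlim : Alim →⋆ₐ[ℂ] (Hlim →L[ℂ] Hlim))
    (hπlim : ∀ (j : ℕ) (a : A j) (ξ : H j), πlim (φlim j a) (J j ξ) = J j (π j a ξ))
    (P : ℕ → Hlim →L[ℂ] Hlim)
    (hP : ∀ k, IsSelfAdjoint (P k) ∧ IsIdempotentElem (P k) ∧
      Set.range (P k) = Set.range (J k))
    (j : ℕ) (a : A j) (ha : BddCommutator (D j) (π j a)) (hasa : IsSelfAdjoint a)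
    (k : ℕ) (hjk : j ≤ k) (x : D₀.domain) :
    P k (x : Hlim) ∈ (D₀.domain : Set Hlim) ∧
    πlim (φlim j a) (x : Hlim) ∈ (D₀.domain : Set Hlim) ∧
    ∃ (h1 : πlim (φlim j a) (P k (x : Hlim)) ∈ D₀.closure.domain)
      (h2 : P k (x : Hlim) ∈ D₀.closure.domain)
      (h3 : πlim (φlim j a) (x : Hlim) ∈ D₀.closure.domain)
      (h4 : (x : Hlim) ∈ D₀.closure.domain),
      D₀.closure ⟨πlim (φlim j a) (P k (x : Hlim)), h1⟩ -
          πlim (φlim j a) (D₀.closure ⟨P k (x : Hlim), h2⟩) =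
        P k (D₀.closure ⟨πlim (φlim j a) (x : Hlim), h3⟩ -
          πlim (φlim j a) (D₀.closure ⟨(x : Hlim), h4⟩)) := by
  obtain ⟨x, hx⟩ := x
  obtain ⟨n, hkn, ξ, rfl⟩ : ∃ n, k ≤ n ∧ ∃ ξ : (D n).domain, J n ξ = x := by
    obtain ⟨n, hkn, ξ, hξ, hx⟩ := exists_le_mem_of_mem_iUnion_image (fun j k hjk => I j k hjk)
      (fun j => J j) hJ (fun j => (D j).domain) (fun j k hjk ξ hξ => (hDcompat j k hjk ⟨ξ, hξ⟩).1)
      (hdom ▸ hx : x ∈ ⋃ j, (J j) '' ((D j).domain : Set (H j))) k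
    exact ⟨n, hkn, ⟨ξ, hξ⟩, hx⟩
  set V := LinearMap.range (I k n hkn).toLinearMap
  set b := π n (φ j n (hjk.trans hkn) a)
  have hbdom : ∀ ζ : (D n).domain, b ζ ∈ (D n).domain :=
    fun ζ => (hsmooth j n _ a ha).elim fun _ hC => (hC ζ).1
  have hbV : Set.MapsTo b V V := by
    rintro _ ⟨ζ, rfl⟩
    exact ⟨π k (φ j k hjk a) ζ, by simp [b, hint, hφ]⟩
  have hPJ : ∀ z, P k (J n z) = J n (V.starProjection z) := by
    refine IsStarProjection.apply_linearIsometry ⟨(hP k).2.1, (hP k).1⟩ (J n) V ?_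
    rw [(hP k).2.2, LinearMap.coe_range, LinearIsometry.coe_toLinearMap, ← Set.range_comp]
    exact congrArg Set.range (funext fun ζ => (hJ k n hkn ζ).symm)
  have hJD : ∀ ζ : (D n).domain, ∃ h : J n ζ ∈ D₀.domain, D₀ ⟨J n ζ, h⟩ = J n (D n ζ) :=
    fun ζ => ⟨(hdom ▸ Set.mem_iUnion.mpr ⟨n, ζ, ζ.2, rfl⟩ : J n ζ ∈ (D₀.domain : Set Hlim)),
      hact n ζ _⟩
  exact ((hDsa n).isFormalAdjoint_s11.reduces_range (hDsa k) (I k n hkn) (hDcompat k n hkn)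
    ).closure_commutator_comm_of_intertwines (J n).toLinearMap hJD
    (((hasa.map (φ j n _)).map (π n)).commute_starProjection hbV) hbdom
    (fun z => by rw [LinearIsometry.coe_toLinearMap, ← hφlim j n (hjk.trans hkn) a, hπlim]) hPJ ξ

/-- For selfadjoint `a ∈ A_j^∞` and `k ≥ j`, the projection `P_k`
preserves `𝒟`, `π(φ_j(a))` preserves `𝒟`, and the commutator `[D, π(φ_j(a))]` commutes
with `P_k` on `𝒟`. -/
theorem stmt11
    (H : ℕ → Type*) [∀ j, NormedAddCommGroup (H j)] [∀ j, InnerProductSpace ℂ (H j)]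
    [∀ j, CompleteSpace (H j)]
    (Hlim : Type*) [NormedAddCommGroup Hlim] [InnerProductSpace ℂ Hlim] [CompleteSpace Hlim]
    (I : ∀ j k : ℕ, j ≤ k → H j →ₗᵢ[ℂ] H k) (J : ∀ j : ℕ, H j →ₗᵢ[ℂ] Hlim)
    (hI : ∀ (j k l : ℕ) (hjk : j ≤ k) (hkl : k ≤ l) (ξ : H j),
      I k l hkl (I j k hjk ξ) = I j l (hjk.trans hkl) ξ)
    (hJ : ∀ (j k : ℕ) (hjk : j ≤ k) (ξ : H j), J k (I j k hjk ξ) = J j ξ)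
    (hdense : Dense (⋃ j, Set.range (J j)))
    (D : ∀ j, H j →ₗ.[ℂ] H j)
    (hDdense : ∀ j, Dense ((D j).domain : Set (H j)))
    (hDsa : ∀ j, IsSelfAdjoint (D j))
    (hDcompat : ∀ (j k : ℕ) (hjk : j ≤ k) (ξ : (D j).domain),
      ∃ h : I j k hjk ξ ∈ (D k).domain, (D k) ⟨I j k hjk ξ, h⟩ = I j k hjk ((D j) ξ))
    (D₀ : Hlim →ₗ.[ℂ] Hlim)
    (hdom : (D₀.domain : Set Hlim) = ⋃ j, (J j) '' ((D j).domain : Set (H j)))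
    (hact : ∀ (j : ℕ) (ξ : (D j).domain) (h : J j ξ ∈ D₀.domain), D₀ ⟨J j ξ, h⟩ = J j ((D j) ξ))
    (A : ℕ → Type*) [∀ j, NormedRing (A j)] [∀ j, StarRing (A j)] [∀ j, CStarRing (A j)]
    [∀ j, NormedAlgebra ℂ (A j)] [∀ j, StarModule ℂ (A j)] [∀ j, CompleteSpace (A j)]
    (φ : ∀ j k : ℕ, j ≤ k → A j →⋆ₐ[ℂ] A k)
    (hφinj : ∀ (j k : ℕ) (hjk : j ≤ k), Function.Injective (φ j k hjk))
    (hφ : ∀ (j k l : ℕ) (hjk : j ≤ k) (hkl : k ≤ l) (a : A j),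
      φ k l hkl (φ j k hjk a) = φ j l (hjk.trans hkl) a)
    (π : ∀ j, A j →⋆ₐ[ℂ] (H j →L[ℂ] H j))
    (hπinj : ∀ j, Function.Injective (π j))
    (hint : ∀ (j k : ℕ) (hjk : j ≤ k) (a : A j) (ξ : H j),
      I j k hjk (π j a ξ) = π k (φ j k hjk a) (I j k hjk ξ))
    (hsmooth : ∀ (j k : ℕ) (hjk : j ≤ k) (a : A j),
      BddCommutator (D j) (π j a) → BddCommutator (D k) (π k (φ j k hjk a)))
    (Alim : Type*) [NormedRing Alim] [StarRing Alim] [CStarRing Alim]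
    [NormedAlgebra ℂ Alim] [StarModule ℂ Alim] [CompleteSpace Alim]
    (φlim : ∀ j, A j →⋆ₐ[ℂ] Alim)
    (hφliminj : ∀ j, Function.Injective (φlim j))
    (hφlim : ∀ (j k : ℕ) (hjk : j ≤ k) (a : A j), φlim k (φ j k hjk a) = φlim j a)
    (hAdense : Dense (⋃ j, Set.range (φlim j)))
    (πlim : Alim →⋆ₐ[ℂ] (Hlim →L[ℂ] Hlim))
    (hπlim : ∀ (j : ℕ) (a : A j) (ξ : H j), πlim (φlim j a) (J j ξ) = J j (π j a ξ))
    (P : ℕ → Hlim →L[ℂ] Hlim)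
    (hP : ∀ k, IsSelfAdjoint (P k) ∧ IsIdempotentElem (P k) ∧
      Set.range (P k) = Set.range (J k))
    (j : ℕ) (a : A j) (ha : BddCommutator (D j) (π j a)) (hasa : IsSelfAdjoint a)
    (k : ℕ) (hjk : j ≤ k) (x : D₀.domain) :
    P k (x : Hlim) ∈ (D₀.domain : Set Hlim) ∧
    πlim (φlim j a) (x : Hlim) ∈ (D₀.domain : Set Hlim) ∧
    ∃ (h1 : πlim (φlim j a) (P k (x : Hlim)) ∈ D₀.closure.domain)
      (h2 : P k (x : Hlim) ∈ D₀.closure.domain)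
      (h3 : πlim (φlim j a) (x : Hlim) ∈ D₀.closure.domain)
      (h4 : (x : Hlim) ∈ D₀.closure.domain),
      D₀.closure ⟨πlim (φlim j a) (P k (x : Hlim)), h1⟩ -
          πlim (φlim j a) (D₀.closure ⟨P k (x : Hlim), h2⟩) =
        P k (D₀.closure ⟨πlim (φlim j a) (x : Hlim), h3⟩ -
          πlim (φlim j a) (D₀.closure ⟨(x : Hlim), h4⟩)) :=
  stmt11_general H Hlim I J hJ D hDsa hDcompat D₀ hdom hact A φ hφ π hint hsmooth Alim φlim hφlim
    πlim hπlim P hP j a ha hasa k hjk x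
end

section
/- Let {(A_j, H_j, D_j)} be a countable inductive system of spectral triples. For every j, every a ∈ A_j^∞, and all k, l with j ≤ l ≤ k: (a) I_{l,k}* ∘ [D_k, π_k(φ_{j,k}(a))] ∘ I_{l,k} = [D_l, π_l(φ_{j,l}(a))] on Dom D_l, and (b) consequently the sequence of commutator norms is monotone: ‖[D_l, π_l(φ_{j,l}(a))]‖ ≤ ‖[D_k, π_k(φ_{j,k}(a))]‖, where ‖[D_m, π_m(b)]‖ denotes the least C with ‖D_m(π_m(b)ξ) − π_m(b)(D_mξ)‖ ≤ C‖ξ‖ for all ξ ∈ Dom D_m. -/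
/-- The norm of the commutator `[Dm, T]`: the least constant `C` such that `T` preserves
the domain of `Dm` and `‖Dm (T ξ) − T (Dm ξ)‖ ≤ C ‖ξ‖` on the domain. -/
noncomputable def commNorm {K : Type*} [NormedAddCommGroup K] [InnerProductSpace ℂ K]
    (Dm : K →ₗ.[ℂ] K) (T : K →L[ℂ] K) : ℝ :=
  sInf {C : ℝ | ∀ ξ : Dm.domain, ∃ h : T ξ ∈ Dm.domain,
    ‖Dm ⟨T ξ, h⟩ - T (Dm ξ)‖ ≤ C * ‖ξ‖}

lemma adj_iso {E F : Type*} [NormedAddCommGroup E] [InnerProductSpace ℂ E] [CompleteSpace E]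
    [NormedAddCommGroup F] [InnerProductSpace ℂ F] [CompleteSpace F]
    (I : E →ₗᵢ[ℂ] F) (x : E) :
    ContinuousLinearMap.adjoint I.toContinuousLinearMap (I x) = x := by
  apply ext_inner_right ℂ
  intro y
  rw [ContinuousLinearMap.adjoint_inner_left]
  simp [LinearIsometry.inner_map_map]

lemma commNorm_nonneg {K : Type*} [NormedAddCommGroup K] [InnerProductSpace ℂ K]
    (Dm : K →ₗ.[ℂ] K) (T : K →L[ℂ] K) : 0 ≤ commNorm Dm T := by
  set S := {C : ℝ | ∀ ξ : Dm.domain, ∃ h : T ξ ∈ Dm.domain,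
    ‖Dm ⟨T ξ, h⟩ - T (Dm ξ)‖ ≤ C * ‖ξ‖} with hS
  by_cases hneg : ∃ C ∈ S, C < 0
  · obtain ⟨C, hC, hC0⟩ := hneg
    have hz : ∀ ξ : Dm.domain, (ξ : K) = 0 := by
      intro ξ
      obtain ⟨h, hle⟩ := hC ξ
      have h0 : (0:ℝ) ≤ ‖Dm ⟨T ξ, h⟩ - T (Dm ξ)‖ := norm_nonneg _
      have hn : (0:ℝ) ≤ ‖(ξ : K)‖ := norm_nonneg _
      have hee : ‖ξ‖ = ‖(ξ : K)‖ := rfl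
      rw [hee] at hle
      have : ‖(ξ : K)‖ = 0 := by nlinarith
      simpa using this
    have huniv : S = Set.univ := by
      ext C'
      simp only [Set.mem_univ, iff_true, hS, Set.mem_setOf_eq]
      intro ξ
      have hv : (ξ : K) = 0 := hz ξ
      have hξ0 : ξ = (0 : Dm.domain) := Subtype.ext hv
      have hT : T (ξ : K) = 0 := by rw [hv]; simp
      refine ⟨by rw [hT]; exact Dm.domain.zero_mem, ?_⟩
      have : (⟨T (ξ:K), by rw [hT]; exact Dm.domain.zero_mem⟩ : Dm.domain) = 0 :=
        Subtype.ext hT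
      rw [this, hξ0]
      simp
    have hnb : ¬ BddBelow S := by
      rw [huniv]
      intro ⟨lb, hlb⟩
      have := hlb (Set.mem_univ (lb - 1))
      linarith
    unfold commNorm
    rw [← hS, Real.sInf_of_not_bddBelow hnb]
  · push_neg at hneg
    exact Real.sInf_nonneg fun C hC => hneg C hC


/-- For `a ∈ A_j^∞` and `j ≤ l ≤ k`:
(a) `I_{l,k}* ∘ [D_k, π_k(φ_{j,k}(a))] ∘ I_{l,k} = [D_l, π_l(φ_{j,l}(a))]` on `Dom D_l`;
(b) the commutator norms are monotone: `‖[D_l, π_l(φ_{j,l}(a))]‖ ≤ ‖[D_k, π_k(φ_{j,k}(a))]‖`. -/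
theorem stmt12
    (H : ℕ → Type*) [∀ j, NormedAddCommGroup (H j)] [∀ j, InnerProductSpace ℂ (H j)]
    [∀ j, CompleteSpace (H j)]
    (I : ∀ j k : ℕ, j ≤ k → H j →ₗᵢ[ℂ] H k)
    (hI : ∀ (j k l : ℕ) (hjk : j ≤ k) (hkl : k ≤ l) (ξ : H j),
      I k l hkl (I j k hjk ξ) = I j l (hjk.trans hkl) ξ)
    (D : ∀ j, H j →ₗ.[ℂ] H j)
    (hDdense : ∀ j, Dense ((D j).domain : Set (H j)))
    (hDsa : ∀ j, IsSelfAdjoint (D j))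
    (hDcompat : ∀ (j k : ℕ) (hjk : j ≤ k) (ξ : (D j).domain),
      ∃ h : I j k hjk ξ ∈ (D k).domain, (D k) ⟨I j k hjk ξ, h⟩ = I j k hjk ((D j) ξ))
    (A : ℕ → Type*) [∀ j, NormedRing (A j)] [∀ j, StarRing (A j)] [∀ j, CStarRing (A j)]
    [∀ j, NormedAlgebra ℂ (A j)] [∀ j, StarModule ℂ (A j)] [∀ j, CompleteSpace (A j)]
    (φ : ∀ j k : ℕ, j ≤ k → A j →⋆ₐ[ℂ] A k)
    (hφinj : ∀ (j k : ℕ) (hjk : j ≤ k), Function.Injective (φ j k hjk))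
    (hφ : ∀ (j k l : ℕ) (hjk : j ≤ k) (hkl : k ≤ l) (a : A j),
      φ k l hkl (φ j k hjk a) = φ j l (hjk.trans hkl) a)
    (π : ∀ j, A j →⋆ₐ[ℂ] (H j →L[ℂ] H j))
    (hπinj : ∀ j, Function.Injective (π j))
    (hint : ∀ (j k : ℕ) (hjk : j ≤ k) (a : A j) (ξ : H j),
      I j k hjk (π j a ξ) = π k (φ j k hjk a) (I j k hjk ξ))
    (hsmooth : ∀ (j k : ℕ) (hjk : j ≤ k) (a : A j),
      BddCommutator (D j) (π j a) → BddCommutator (D k) (π k (φ j k hjk a)))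
    (j : ℕ) (a : A j) (ha : BddCommutator (D j) (π j a))
    (l k : ℕ) (hjl : j ≤ l) (hlk : l ≤ k) :
    (∀ ξ : (D l).domain,
      ∃ (h1 : I l k hlk (ξ : H l) ∈ (D k).domain)
        (h2 : π k (φ j k (hjl.trans hlk) a) (I l k hlk (ξ : H l)) ∈ (D k).domain)
        (h3 : π l (φ j l hjl a) (ξ : H l) ∈ (D l).domain),
        ContinuousLinearMap.adjoint (I l k hlk).toContinuousLinearMap
            ((D k) ⟨π k (φ j k (hjl.trans hlk) a) (I l k hlk (ξ : H l)), h2⟩ -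
              π k (φ j k (hjl.trans hlk) a) ((D k) ⟨I l k hlk (ξ : H l), h1⟩)) =
          (D l) ⟨π l (φ j l hjl a) (ξ : H l), h3⟩ - π l (φ j l hjl a) ((D l) ξ)) ∧
    commNorm (D l) (π l (φ j l hjl a)) ≤
      commNorm (D k) (π k (φ j k (hjl.trans hlk) a)) := by
  have hBl : BddCommutator (D l) (π l (φ j l hjl a)) := hsmooth j l hjl a ha
  have hBk : BddCommutator (D k) (π k (φ j k (hjl.trans hlk) a)) :=
    hsmooth j k (hjl.trans hlk) a ha
  obtain ⟨Cl, hCl⟩ := hBl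
  have hbc : φ l k hlk (φ j l hjl a) = φ j k (hjl.trans hlk) a := hφ j l k hjl hlk a
  -- main pointwise identity
  have main : ∀ ξ : (D l).domain,
      ∃ (h1 : I l k hlk (ξ : H l) ∈ (D k).domain)
        (h2 : π k (φ j k (hjl.trans hlk) a) (I l k hlk (ξ : H l)) ∈ (D k).domain)
        (h3 : π l (φ j l hjl a) (ξ : H l) ∈ (D l).domain),
        (D k) ⟨π k (φ j k (hjl.trans hlk) a) (I l k hlk (ξ : H l)), h2⟩ -
            π k (φ j k (hjl.trans hlk) a) ((D k) ⟨I l k hlk (ξ : H l), h1⟩) =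
          I l k hlk ((D l) ⟨π l (φ j l hjl a) (ξ : H l), h3⟩ - π l (φ j l hjl a) ((D l) ξ)) := by
    intro ξ
    obtain ⟨h1, hD1⟩ := hDcompat l k hlk ξ
    have h3 : π l (φ j l hjl a) (ξ : H l) ∈ (D l).domain := (hCl ξ).choose
    obtain ⟨h2', hD2⟩ := hDcompat l k hlk ⟨π l (φ j l hjl a) (ξ : H l), h3⟩
    have hkey : π k (φ j k (hjl.trans hlk) a) (I l k hlk (ξ : H l)) =
        I l k hlk (π l (φ j l hjl a) (ξ : H l)) := by
      rw [← hbc, ← hint l k hlk (φ j l hjl a) (ξ : H l)]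
    have h2 : π k (φ j k (hjl.trans hlk) a) (I l k hlk (ξ : H l)) ∈ (D k).domain := by
      rw [hkey]; exact h2'
    refine ⟨h1, h2, h3, ?_⟩
    have e1 : (⟨π k (φ j k (hjl.trans hlk) a) (I l k hlk (ξ : H l)), h2⟩ : (D k).domain) =
        ⟨I l k hlk (π l (φ j l hjl a) (ξ : H l)), h2'⟩ := Subtype.ext hkey
    rw [e1, hD2, hD1]
    have e2 : π k (φ j k (hjl.trans hlk) a) (I l k hlk ((D l) ξ)) =
        I l k hlk (π l (φ j l hjl a) ((D l) ξ)) := by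
      rw [← hbc, ← hint l k hlk (φ j l hjl a) ((D l) ξ)]
    rw [e2, ← LinearIsometry.map_sub]
  constructor
  · intro ξ
    obtain ⟨h1, h2, h3, heq⟩ := main ξ
    exact ⟨h1, h2, h3, by rw [heq, adj_iso]⟩
  · -- norm monotonicity
    set Sl := {C : ℝ | ∀ ξ : (D l).domain, ∃ h : π l (φ j l hjl a) ξ ∈ (D l).domain,
      ‖(D l) ⟨π l (φ j l hjl a) ξ, h⟩ - π l (φ j l hjl a) ((D l) ξ)‖ ≤ C * ‖ξ‖} with hSl
    set Sk := {C : ℝ | ∀ ξ : (D k).domain, ∃ h : π k (φ j k (hjl.trans hlk) a) ξ ∈ (D k).domain,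
      ‖(D k) ⟨π k (φ j k (hjl.trans hlk) a) ξ, h⟩ -
        π k (φ j k (hjl.trans hlk) a) ((D k) ξ)‖ ≤ C * ‖ξ‖} with hSk
    have hsub : Sk ⊆ Sl := by
      intro C hC ξ
      obtain ⟨h1, h2, h3, heq⟩ := main ξ
      obtain ⟨h2'', hle⟩ := hC ⟨I l k hlk (ξ : H l), h1⟩
      refine ⟨h3, ?_⟩
      have e0 : (⟨π k (φ j k (hjl.trans hlk) a) (I l k hlk (ξ : H l)), h2''⟩ : (D k).domain) =
          ⟨π k (φ j k (hjl.trans hlk) a) (I l k hlk (ξ : H l)), h2⟩ := rfl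
      rw [e0] at hle
      rw [heq] at hle
      have hnorm : ‖I l k hlk ((D l) ⟨π l (φ j l hjl a) (ξ : H l), h3⟩ -
          π l (φ j l hjl a) ((D l) ξ))‖ =
          ‖(D l) ⟨π l (φ j l hjl a) (ξ : H l), h3⟩ - π l (φ j l hjl a) ((D l) ξ)‖ :=
        (I l k hlk).norm_map _
      have hnξ : ‖(⟨I l k hlk (ξ : H l), h1⟩ : (D k).domain)‖ = ‖ξ‖ := by
        show ‖I l k hlk (ξ : H l)‖ = ‖ξ‖
        rw [(I l k hlk).norm_map]
        rfl
      rw [hnorm, hnξ] at hle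
      exact hle
    have hne : Sk.Nonempty := by
      obtain ⟨Ck, hCk⟩ := hBk
      exact ⟨Ck, hCk⟩
    by_cases hbdd : BddBelow Sl
    · exact csInf_le_csInf hbdd hne hsub
    · have : commNorm (D l) (π l (φ j l hjl a)) = 0 := by
        unfold commNorm
        rw [← hSl, Real.sInf_of_not_bddBelow hbdd]
      rw [this]
      exact commNorm_nonneg _ _
end

section
/- (Theorem 3.2) Let {(A_j, H_j, D_j)} be a countable inductive system of spectral triples with inductive realization (A, H, D). Let j ∈ ℕ and a ∈ A_j^∞. Then the commutator [D, π(φ_j(a))] is bounded on 𝒟 — i.e. there exists C such that ‖D(π(φ_j(a))x) − π(φ_j(a))(Dx)‖ ≤ C‖x‖ for all x ∈ 𝒟 — if and only if the family of commutators {[D_k, π_k(φ_{j,k}(a))]}_{k≥j} is uniformly bounded, i.e. sup_{k≥j} ‖[D_k, π_k(φ_{j,k}(a))]‖ < ∞. -/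
/-- If the commutator is somewhere bounded and `commNorm ≤ C`, then `C` itself is a bound. -/
lemma commNorm_bound {K : Type*} [NormedAddCommGroup K] [InnerProductSpace ℂ K]
    {Dm : K →ₗ.[ℂ] K} {T : K →L[ℂ] K} (hT : BddCommutator Dm T) {C : ℝ}
    (hC : commNorm Dm T ≤ C) (ξ : Dm.domain) :
    ∃ h : T ξ ∈ Dm.domain, ‖Dm ⟨T ξ, h⟩ - T (Dm ξ)‖ ≤ C * ‖ξ‖ := by
  obtain ⟨C₀, hC₀⟩ := hT
  obtain ⟨h, -⟩ := hC₀ ξ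
  refine ⟨h, ?_⟩
  by_cases hz : ξ = 0
  · have hTz : (⟨T (ξ : K), h⟩ : Dm.domain) = 0 := Subtype.ext (by simp [hz])
    rw [hTz, hz]
    simp
  · have hξ : 0 < ‖ξ‖ := norm_pos_iff.mpr hz
    refine le_of_forall_pos_le_add fun ε hε => ?_
    have hlt : sInf {C : ℝ | ∀ ξ : Dm.domain, ∃ h : T ξ ∈ Dm.domain,
        ‖Dm ⟨T ξ, h⟩ - T (Dm ξ)‖ ≤ C * ‖ξ‖} < C + ε / ‖ξ‖ :=
      lt_of_le_of_lt hC (lt_add_of_pos_right _ (div_pos hε hξ))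
    have hne : {C : ℝ | ∀ ξ : Dm.domain, ∃ h : T ξ ∈ Dm.domain,
        ‖Dm ⟨T ξ, h⟩ - T (Dm ξ)‖ ≤ C * ‖ξ‖}.Nonempty := ⟨C₀, hC₀⟩
    obtain ⟨c, hcS, hc⟩ := exists_lt_of_csInf_lt hne hlt
    obtain ⟨h', hb⟩ := hcS ξ
    calc ‖Dm ⟨T ξ, h⟩ - T (Dm ξ)‖ ≤ c * ‖ξ‖ := hb
      _ ≤ (C + ε / ‖ξ‖) * ‖ξ‖ := mul_le_mul_of_nonneg_right hc.le (norm_nonneg _)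
      _ = C * ‖ξ‖ + ε := by rw [add_mul, div_mul_cancel₀ _ hξ.ne']

/-- If `C` is a bound for the commutator, then `commNorm ≤ max C 0`. -/
lemma commNorm_le_max {K : Type*} [NormedAddCommGroup K] [InnerProductSpace ℂ K]
    {Dm : K →ₗ.[ℂ] K} {T : K →L[ℂ] K} {C : ℝ}
    (h : ∀ ξ : Dm.domain, ∃ h : T ξ ∈ Dm.domain, ‖Dm ⟨T ξ, h⟩ - T (Dm ξ)‖ ≤ C * ‖ξ‖) :
    commNorm Dm T ≤ max C 0 := by
  unfold commNorm
  by_cases hb : BddBelow {C : ℝ | ∀ ξ : Dm.domain, ∃ h : T ξ ∈ Dm.domain,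
      ‖Dm ⟨T ξ, h⟩ - T (Dm ξ)‖ ≤ C * ‖ξ‖}
  · refine csInf_le hb fun ξ => ?_
    obtain ⟨hm, hle⟩ := h ξ
    exact ⟨hm, hle.trans (mul_le_mul_of_nonneg_right (le_max_left _ _) (norm_nonneg _))⟩
  · rw [Real.sInf_of_not_bddBelow hb]
    exact le_max_right _ _

/-- **Theorem 3.2.** For `a ∈ A_j^∞`, the commutator `[D, π(φ_j(a))]` is
bounded on `𝒟` if and only if the family `{[D_k, π_k(φ_{j,k}(a))]}_{k ≥ j}` is uniformly
bounded. -/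
theorem stmt13
    (H : ℕ → Type*) [∀ j, NormedAddCommGroup (H j)] [∀ j, InnerProductSpace ℂ (H j)]
    [∀ j, CompleteSpace (H j)]
    (Hlim : Type*) [NormedAddCommGroup Hlim] [InnerProductSpace ℂ Hlim] [CompleteSpace Hlim]
    (I : ∀ j k : ℕ, j ≤ k → H j →ₗᵢ[ℂ] H k) (J : ∀ j : ℕ, H j →ₗᵢ[ℂ] Hlim)
    (hI : ∀ (j k l : ℕ) (hjk : j ≤ k) (hkl : k ≤ l) (ξ : H j),
      I k l hkl (I j k hjk ξ) = I j l (hjk.trans hkl) ξ)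
    (hJ : ∀ (j k : ℕ) (hjk : j ≤ k) (ξ : H j), J k (I j k hjk ξ) = J j ξ)
    (hdense : Dense (⋃ j, Set.range (J j)))
    (D : ∀ j, H j →ₗ.[ℂ] H j)
    (hDdense : ∀ j, Dense ((D j).domain : Set (H j)))
    (hDsa : ∀ j, IsSelfAdjoint (D j))
    (hDcompat : ∀ (j k : ℕ) (hjk : j ≤ k) (ξ : (D j).domain),
      ∃ h : I j k hjk ξ ∈ (D k).domain, (D k) ⟨I j k hjk ξ, h⟩ = I j k hjk ((D j) ξ))
    (D₀ : Hlim →ₗ.[ℂ] Hlim)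
    (hdom : (D₀.domain : Set Hlim) = ⋃ j, (J j) '' ((D j).domain : Set (H j)))
    (hact : ∀ (j : ℕ) (ξ : (D j).domain) (h : J j ξ ∈ D₀.domain), D₀ ⟨J j ξ, h⟩ = J j ((D j) ξ))
    (A : ℕ → Type*) [∀ j, NormedRing (A j)] [∀ j, StarRing (A j)] [∀ j, CStarRing (A j)]
    [∀ j, NormedAlgebra ℂ (A j)] [∀ j, StarModule ℂ (A j)] [∀ j, CompleteSpace (A j)]
    (φ : ∀ j k : ℕ, j ≤ k → A j →⋆ₐ[ℂ] A k)
    (hφinj : ∀ (j k : ℕ) (hjk : j ≤ k), Function.Injective (φ j k hjk))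
    (hφ : ∀ (j k l : ℕ) (hjk : j ≤ k) (hkl : k ≤ l) (a : A j),
      φ k l hkl (φ j k hjk a) = φ j l (hjk.trans hkl) a)
    (π : ∀ j, A j →⋆ₐ[ℂ] (H j →L[ℂ] H j))
    (hπinj : ∀ j, Function.Injective (π j))
    (hint : ∀ (j k : ℕ) (hjk : j ≤ k) (a : A j) (ξ : H j),
      I j k hjk (π j a ξ) = π k (φ j k hjk a) (I j k hjk ξ))
    (hsmooth : ∀ (j k : ℕ) (hjk : j ≤ k) (a : A j),
      BddCommutator (D j) (π j a) → BddCommutator (D k) (π k (φ j k hjk a)))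
    (Alim : Type*) [NormedRing Alim] [StarRing Alim] [CStarRing Alim]
    [NormedAlgebra ℂ Alim] [StarModule ℂ Alim] [CompleteSpace Alim]
    (φlim : ∀ j, A j →⋆ₐ[ℂ] Alim)
    (hφliminj : ∀ j, Function.Injective (φlim j))
    (hφlim : ∀ (j k : ℕ) (hjk : j ≤ k) (a : A j), φlim k (φ j k hjk a) = φlim j a)
    (hAdense : Dense (⋃ j, Set.range (φlim j)))
    (πlim : Alim →⋆ₐ[ℂ] (Hlim →L[ℂ] Hlim))
    (hπlim : ∀ (j : ℕ) (a : A j) (ξ : H j), πlim (φlim j a) (J j ξ) = J j (π j a ξ))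
    (j : ℕ) (a : A j) (ha : BddCommutator (D j) (π j a)) :
    (∃ C : ℝ, ∀ (x : D₀.domain)
        (h1 : (x : Hlim) ∈ D₀.closure.domain)
        (h2 : πlim (φlim j a) (x : Hlim) ∈ D₀.closure.domain),
        ‖D₀.closure ⟨πlim (φlim j a) (x : Hlim), h2⟩ -
            πlim (φlim j a) (D₀.closure ⟨(x : Hlim), h1⟩)‖ ≤ C * ‖x‖) ↔
      ∃ C : ℝ, ∀ (k : ℕ) (hjk : j ≤ k), commNorm (D k) (π k (φ j k hjk a)) ≤ C := by
  constructor
  · -- forward direction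
    rintro ⟨C, hC⟩
    refine ⟨max C 0, fun k hjk => ?_⟩
    have hbk := hsmooth j k hjk a ha
    refine commNorm_le_max fun ξ => ?_
    obtain ⟨Ck, hCk⟩ := hbk
    obtain ⟨hmem, -⟩ := hCk ξ
    have hxmem : (J k (ξ : H k)) ∈ D₀.domain := by
      rw [← SetLike.mem_coe, hdom]
      exact Set.mem_iUnion.2 ⟨k, ⟨ξ, ξ.2, rfl⟩⟩
    have hTmem : (J k (π k (φ j k hjk a) (ξ : H k))) ∈ D₀.domain := by
      rw [← SetLike.mem_coe, hdom]
      exact Set.mem_iUnion.2 ⟨k, ⟨_, hmem, rfl⟩⟩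
    have key : πlim (φlim j a) (J k (ξ : H k)) = J k (π k (φ j k hjk a) (ξ : H k)) := by
      rw [← hφlim j k hjk a, hπlim]
    have h1 : (J k (ξ : H k)) ∈ D₀.closure.domain := D₀.le_closure.1 hxmem
    have h2 : πlim (φlim j a) (J k (ξ : H k)) ∈ D₀.closure.domain := by
      rw [key]; exact D₀.le_closure.1 hTmem
    have hCx := hC ⟨J k (ξ : H k), hxmem⟩ h1 h2
    have e1 : D₀.closure ⟨J k (ξ : H k), h1⟩ = J k ((D k) ξ) := by
      rw [← D₀.le_closure.2 (x := ⟨J k (ξ : H k), hxmem⟩) (y := ⟨J k (ξ : H k), h1⟩) rfl]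
      exact hact k ξ hxmem
    have e2 : D₀.closure ⟨πlim (φlim j a) (J k (ξ : H k)), h2⟩ =
        J k ((D k) ⟨π k (φ j k hjk a) (ξ : H k), hmem⟩) := by
      rw [← D₀.le_closure.2 (x := ⟨J k (π k (φ j k hjk a) (ξ : H k)), hTmem⟩)
        (y := ⟨πlim (φlim j a) (J k (ξ : H k)), h2⟩) key.symm]
      exact hact k ⟨π k (φ j k hjk a) (ξ : H k), hmem⟩ hTmem
    rw [e1, e2] at hCx
    rw [show πlim (φlim j a) (J k ((D k) ξ)) = J k (π k (φ j k hjk a) ((D k) ξ)) by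
      rw [← hφlim j k hjk a, hπlim]] at hCx
    rw [← map_sub, (J k).norm_map] at hCx
    refine ⟨hmem, ?_⟩
    calc ‖(D k) ⟨π k (φ j k hjk a) (ξ : H k), hmem⟩ - π k (φ j k hjk a) ((D k) ξ)‖
        ≤ C * ‖(⟨J k (ξ : H k), hxmem⟩ : D₀.domain)‖ := hCx
      _ = C * ‖ξ‖ := by
          show C * ‖J k (ξ : H k)‖ = C * ‖(ξ : H k)‖
          rw [(J k).norm_map]
  · -- backward direction
    rintro ⟨C, hC⟩
    refine ⟨C, fun x h1 h2 => ?_⟩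
    have hx : (x : Hlim) ∈ ⋃ k, (J k) '' ((D k).domain : Set (H k)) := by
      rw [← hdom]; exact x.2
    obtain ⟨k, ξᵥ, hξmem, hJx⟩ := Set.mem_iUnion.mp hx
    set m := max j k with hm
    have hjm : j ≤ m := le_max_left _ _
    have hkm : k ≤ m := le_max_right _ _
    obtain ⟨hImem, -⟩ := hDcompat k m hkm ⟨ξᵥ, hξmem⟩
    set ξ' : (D m).domain := ⟨I k m hkm ξᵥ, hImem⟩ with hξ'
    have hJ' : J m (ξ' : H m) = (x : Hlim) := by
      rw [hξ']; exact (hJ k m hkm ξᵥ).trans hJx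
    have hbm := hsmooth j m hjm a ha
    obtain ⟨hmem, hbound⟩ := commNorm_bound hbm (hC m hjm) ξ'
    have key : πlim (φlim j a) (x : Hlim) = J m (π m (φ j m hjm a) (ξ' : H m)) := by
      rw [← hJ', ← hφlim j m hjm a, hπlim]
    have hx2 : J m (ξ' : H m) ∈ D₀.domain := by rw [hJ']; exact x.2
    have hTdom : J m (π m (φ j m hjm a) (ξ' : H m)) ∈ D₀.domain := by
      rw [← SetLike.mem_coe, hdom]
      exact Set.mem_iUnion.2 ⟨m, ⟨_, hmem, rfl⟩⟩
    have e1 : D₀.closure ⟨(x : Hlim), h1⟩ = J m ((D m) ξ') := by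
      rw [← D₀.le_closure.2 (x := ⟨J m (ξ' : H m), hx2⟩) (y := ⟨(x : Hlim), h1⟩) hJ']
      exact hact m ξ' hx2
    have e2 : D₀.closure ⟨πlim (φlim j a) (x : Hlim), h2⟩ =
        J m ((D m) ⟨π m (φ j m hjm a) (ξ' : H m), hmem⟩) := by
      rw [← D₀.le_closure.2 (x := ⟨J m (π m (φ j m hjm a) (ξ' : H m)), hTdom⟩)
        (y := ⟨πlim (φlim j a) (x : Hlim), h2⟩) key.symm]
      exact hact m ⟨π m (φ j m hjm a) (ξ' : H m), hmem⟩ hTdom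
    rw [e1, e2]
    rw [show πlim (φlim j a) (J m ((D m) ξ')) = J m (π m (φ j m hjm a) ((D m) ξ')) by
      rw [← hφlim j m hjm a, hπlim]]
    rw [← map_sub, (J m).norm_map]
    calc ‖(D m) ⟨π m (φ j m hjm a) (ξ' : H m), hmem⟩ - π m (φ j m hjm a) ((D m) ξ')‖
        ≤ C * ‖ξ'‖ := hbound
      _ = C * ‖x‖ := by
          show C * ‖(ξ' : H m)‖ = C * ‖(x : Hlim)‖
          rw [← hJ', (J m).norm_map]
end

section
/- (Corollary) Let {(A_j, H_j, D_j)} be a countable inductive system of spectral triples with inductive realization (A, H, D), and assume each A_j^∞ is dense in A_j. If for every j ∈ ℕ and every a ∈ A_j^∞ one has sup_{k≥j} ‖[D_k, π_k(φ_{j,k}(a))]‖ < ∞, then the set A^∞ := { b ∈ A : π(b)(𝒟) ⊆ Dom D and there exists C such that ‖D(π(b)x) − π(b)(Dx)‖ ≤ C‖x‖ for all x ∈ 𝒟 } is dense in A. -/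
/-- **Corollary.** If each `A_j^∞` is dense in `A_j` and for every `j` and
`a ∈ A_j^∞` the commutator norms `‖[D_k, π_k(φ_{j,k}(a))]‖` (for `k ≥ j`) are uniformly
bounded, then `A^∞` is dense in `A`. -/
theorem stmt14
    (H : ℕ → Type*) [∀ j, NormedAddCommGroup (H j)] [∀ j, InnerProductSpace ℂ (H j)]
    [∀ j, CompleteSpace (H j)]
    (Hlim : Type*) [NormedAddCommGroup Hlim] [InnerProductSpace ℂ Hlim] [CompleteSpace Hlim]
    (I : ∀ j k : ℕ, j ≤ k → H j →ₗᵢ[ℂ] H k) (J : ∀ j : ℕ, H j →ₗᵢ[ℂ] Hlim)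
    (hI : ∀ (j k l : ℕ) (hjk : j ≤ k) (hkl : k ≤ l) (ξ : H j),
      I k l hkl (I j k hjk ξ) = I j l (hjk.trans hkl) ξ)
    (hJ : ∀ (j k : ℕ) (hjk : j ≤ k) (ξ : H j), J k (I j k hjk ξ) = J j ξ)
    (hdense : Dense (⋃ j, Set.range (J j)))
    (D : ∀ j, H j →ₗ.[ℂ] H j)
    (hDdense : ∀ j, Dense ((D j).domain : Set (H j)))
    (hDsa : ∀ j, IsSelfAdjoint (D j))
    (hDcompat : ∀ (j k : ℕ) (hjk : j ≤ k) (ξ : (D j).domain),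
      ∃ h : I j k hjk ξ ∈ (D k).domain, (D k) ⟨I j k hjk ξ, h⟩ = I j k hjk ((D j) ξ))
    (D₀ : Hlim →ₗ.[ℂ] Hlim)
    (hdom : (D₀.domain : Set Hlim) = ⋃ j, (J j) '' ((D j).domain : Set (H j)))
    (hact : ∀ (j : ℕ) (ξ : (D j).domain) (h : J j ξ ∈ D₀.domain), D₀ ⟨J j ξ, h⟩ = J j ((D j) ξ))
    (A : ℕ → Type*) [∀ j, NormedRing (A j)] [∀ j, StarRing (A j)] [∀ j, CStarRing (A j)]
    [∀ j, NormedAlgebra ℂ (A j)] [∀ j, StarModule ℂ (A j)] [∀ j, CompleteSpace (A j)]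
    (φ : ∀ j k : ℕ, j ≤ k → A j →⋆ₐ[ℂ] A k)
    (hφinj : ∀ (j k : ℕ) (hjk : j ≤ k), Function.Injective (φ j k hjk))
    (hφ : ∀ (j k l : ℕ) (hjk : j ≤ k) (hkl : k ≤ l) (a : A j),
      φ k l hkl (φ j k hjk a) = φ j l (hjk.trans hkl) a)
    (π : ∀ j, A j →⋆ₐ[ℂ] (H j →L[ℂ] H j))
    (hπinj : ∀ j, Function.Injective (π j))
    (hint : ∀ (j k : ℕ) (hjk : j ≤ k) (a : A j) (ξ : H j),
      I j k hjk (π j a ξ) = π k (φ j k hjk a) (I j k hjk ξ))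
    (hsmooth : ∀ (j k : ℕ) (hjk : j ≤ k) (a : A j),
      BddCommutator (D j) (π j a) → BddCommutator (D k) (π k (φ j k hjk a)))
    (Alim : Type*) [NormedRing Alim] [StarRing Alim] [CStarRing Alim]
    [NormedAlgebra ℂ Alim] [StarModule ℂ Alim] [CompleteSpace Alim]
    (φlim : ∀ j, A j →⋆ₐ[ℂ] Alim)
    (hφliminj : ∀ j, Function.Injective (φlim j))
    (hφlim : ∀ (j k : ℕ) (hjk : j ≤ k) (a : A j), φlim k (φ j k hjk a) = φlim j a)
    (hAdense : Dense (⋃ j, Set.range (φlim j)))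
    (πlim : Alim →⋆ₐ[ℂ] (Hlim →L[ℂ] Hlim))
    (hπlim : ∀ (j : ℕ) (a : A j) (ξ : H j), πlim (φlim j a) (J j ξ) = J j (π j a ξ))
    (hAjdense : ∀ j, Dense {a : A j | BddCommutator (D j) (π j a)})
    (hbdd : ∀ (j : ℕ) (a : A j), BddCommutator (D j) (π j a) →
      ∃ C : ℝ, ∀ (k : ℕ) (hjk : j ≤ k), commNorm (D k) (π k (φ j k hjk a)) ≤ C) :
    Dense {b : Alim |
      (∀ x : D₀.domain, πlim b (x : Hlim) ∈ D₀.closure.domain) ∧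
      ∃ C : ℝ, ∀ (x : D₀.domain)
        (h1 : (x : Hlim) ∈ D₀.closure.domain)
        (h2 : πlim b (x : Hlim) ∈ D₀.closure.domain),
        ‖D₀.closure ⟨πlim b (x : Hlim), h2⟩ -
            πlim b (D₀.closure ⟨(x : Hlim), h1⟩)‖ ≤ C * ‖x‖} := by
  classical
  -- Step A: a uniform pointwise commutator bound from the `commNorm` bound.
  have keybound : ∀ (j : ℕ) (a : A j), BddCommutator (D j) (π j a) →
      ∃ C : ℝ, ∀ (k : ℕ) (hjk : j ≤ k) (ξ : (D k).domain),
        ∃ h : π k (φ j k hjk a) ξ ∈ (D k).domain,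
          ‖(D k) ⟨π k (φ j k hjk a) ξ, h⟩ - π k (φ j k hjk a) ((D k) ξ)‖ ≤ C * ‖ξ‖ := by
    intro j a ha
    obtain ⟨C, hC⟩ := hbdd j a ha
    refine ⟨C, fun k hjk ξ => ?_⟩
    have hk : BddCommutator (D k) (π k (φ j k hjk a)) := hsmooth j k hjk a ha
    obtain ⟨C₀, hC₀⟩ := hk
    obtain ⟨h, -⟩ := hC₀ ξ
    refine ⟨h, ?_⟩
    by_cases hξ : (ξ : H k) = 0
    · have hz : ξ = 0 := Subtype.ext hξ
      subst hz
      have h0 : (⟨π k (φ j k hjk a) ((0 : (D k).domain) : H k), h⟩ : (D k).domain) = 0 := by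
        apply Subtype.ext; simp
      rw [h0]
      simp
    · have hpos : (0:ℝ) < ‖(ξ : H k)‖ := norm_pos_iff.mpr hξ
      have hlow : ‖(D k) ⟨π k (φ j k hjk a) ξ, h⟩ - π k (φ j k hjk a) ((D k) ξ)‖ / ‖(ξ : H k)‖ ≤
          commNorm (D k) (π k (φ j k hjk a)) := by
        unfold commNorm
        refine le_csInf ⟨C₀, hC₀⟩ fun b hb => ?_
        obtain ⟨h', hb'⟩ := hb ξ
        rw [div_le_iff₀ hpos]
        exact hb'
      have := hlow.trans (hC k hjk)
      rwa [div_le_iff₀ hpos] at this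
  -- Step B: any `φlim j a` with `a` smooth lies in the set.
  have mem_smooth : ∀ (j : ℕ) (a : A j), BddCommutator (D j) (π j a) →
      (φlim j a) ∈ {b : Alim |
        (∀ x : D₀.domain, πlim b (x : Hlim) ∈ D₀.closure.domain) ∧
        ∃ C : ℝ, ∀ (x : D₀.domain)
          (h1 : (x : Hlim) ∈ D₀.closure.domain)
          (h2 : πlim b (x : Hlim) ∈ D₀.closure.domain),
          ‖D₀.closure ⟨πlim b (x : Hlim), h2⟩ -
              πlim b (D₀.closure ⟨(x : Hlim), h1⟩)‖ ≤ C * ‖x‖} := by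
    intro j a ha
    obtain ⟨C, hC⟩ := keybound j a ha
    -- For every `x` in the domain, find a level `m ≥ j` realizing `x`.
    have hx : ∀ x : D₀.domain, ∃ (m : ℕ) (hjm : j ≤ m) (η : (D m).domain),
        (x : Hlim) = J m η := by
      intro x
      have hxm : (x : Hlim) ∈ ⋃ k, (J k) '' ((D k).domain : Set (H k)) := hdom ▸ x.2
      obtain ⟨k, ξ, hξmem, hξeq⟩ := by simpa using hxm
      obtain ⟨hη, -⟩ := hDcompat k (max j k) (le_max_right j k) ⟨ξ, hξmem⟩
      exact ⟨max j k, le_max_left j k, ⟨I k (max j k) (le_max_right j k) ξ, hη⟩,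
        by rw [← hξeq, hJ k (max j k) (le_max_right j k) ξ]⟩
    -- basic computation of `πlim (φlim j a)` on `J m η`.
    have hpi : ∀ (m : ℕ) (hjm : j ≤ m) (v : H m),
        πlim (φlim j a) (J m v) = J m (π m (φ j m hjm a) v) := by
      intro m hjm v
      rw [← hφlim j m hjm a, hπlim m (φ j m hjm a) v]
    constructor
    · intro x
      obtain ⟨m, hjm, η, hxeq⟩ := hx x
      obtain ⟨hmem, -⟩ := hC m hjm η
      have : πlim (φlim j a) (x : Hlim) ∈ (D₀.domain : Set Hlim) := by
        rw [hxeq, hpi m hjm η, hdom]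
        exact Set.mem_iUnion.mpr ⟨m, Set.mem_image_of_mem _ hmem⟩
      exact D₀.le_closure.1 this
    · refine ⟨C, fun x h1 h2 => ?_⟩
      obtain ⟨m, hjm, η, hxeq⟩ := hx x
      obtain ⟨hmem, hbnd⟩ := hC m hjm η
      set T := π m (φ j m hjm a) with hT
      -- rewrite the two closure applications
      have hxd : (x : Hlim) ∈ D₀.domain := x.2
      have e1 : D₀.closure ⟨(x : Hlim), h1⟩ = J m ((D m) η) := by
        have : D₀ ⟨(x : Hlim), hxd⟩ = D₀.closure ⟨(x : Hlim), h1⟩ :=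
          D₀.le_closure.2 rfl
        rw [← this]
        have hxsub : (⟨(x : Hlim), hxd⟩ : D₀.domain) = ⟨J m η, hxeq ▸ hxd⟩ :=
          Subtype.ext hxeq
        rw [hxsub, hact m η (hxeq ▸ hxd)]
      have hpx : πlim (φlim j a) (x : Hlim) = J m (T η) := by
        rw [hxeq, hpi m hjm η]
      have hpxd : πlim (φlim j a) (x : Hlim) ∈ (D₀.domain : Set Hlim) := by
        rw [hpx]
        show _ ∈ (D₀.domain : Set Hlim)
        rw [hdom]
        exact Set.mem_iUnion.mpr ⟨m, Set.mem_image_of_mem _ hmem⟩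
      have e2 : D₀.closure ⟨πlim (φlim j a) (x : Hlim), h2⟩ = J m ((D m) ⟨T η, hmem⟩) := by
        have h3 : D₀ ⟨πlim (φlim j a) (x : Hlim), hpxd⟩ =
            D₀.closure ⟨πlim (φlim j a) (x : Hlim), h2⟩ := D₀.le_closure.2 rfl
        rw [← h3]
        have hxsub : (⟨πlim (φlim j a) (x : Hlim), hpxd⟩ : D₀.domain) =
            ⟨J m ((⟨T η, hmem⟩ : (D m).domain) : H m), hpx ▸ hpxd⟩ := Subtype.ext hpx
        rw [hxsub, hact m ⟨T η, hmem⟩ (hpx ▸ hpxd)]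
      rw [e1, e2, hpi m hjm ((D m) η)]
      rw [← (J m).map_sub, (J m).norm_map]
      have hnx : ‖x‖ = ‖η‖ := by
        show ‖(x : Hlim)‖ = ‖(η : H m)‖
        rw [hxeq, (J m).norm_map]
      rw [hnx]
      exact hbnd
  -- Step C: density.
  letI : ∀ j, CStarAlgebra (A j) := fun j =>
    { (inferInstance : NormedRing (A j)), (inferInstance : StarRing (A j)),
      (inferInstance : CStarRing (A j)), (inferInstance : NormedAlgebra ℂ (A j)),
      (inferInstance : StarModule ℂ (A j)), (inferInstance : CompleteSpace (A j)) with }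
  letI : CStarAlgebra Alim :=
    { (inferInstance : NormedRing Alim), (inferInstance : StarRing Alim),
      (inferInstance : CStarRing Alim), (inferInstance : NormedAlgebra ℂ Alim),
      (inferInstance : StarModule ℂ Alim), (inferInstance : CompleteSpace Alim) with }
  rw [Metric.dense_iff]
  intro b ε hε
  have h1 := Metric.dense_iff.mp hAdense b (ε/2) (by positivity)
  obtain ⟨y, hy_ball, hy_mem⟩ := h1
  obtain ⟨j, hyj⟩ := Set.mem_iUnion.mp hy_mem
  obtain ⟨a, rfl⟩ := hyj
  have h2 := Metric.dense_iff.mp (hAjdense j) a (ε/2) (by positivity)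
  obtain ⟨a', ha'_ball, ha'_smooth⟩ := h2
  refine ⟨φlim j a', ?_, mem_smooth j a' ha'_smooth⟩
  rw [Metric.mem_ball] at hy_ball ha'_ball ⊢
  have hiso : dist (φlim j a') (φlim j a) = dist a' a :=
    (NonUnitalStarAlgHom.isometry (φlim j) (hφliminj j)).dist_eq a' a
  have hb1 : dist (φlim j a') (φlim j a) < ε/2 := by rw [hiso]; exact ha'_ball
  have := dist_triangle (φlim j a') (φlim j a) b
  linarith
end

section
/- (Connes' Cantor-set spectral triple, compact resolvent) Let ℓ : ℕ → ℝ satisfy ℓ_n > 0 for all n and ℓ_n → 0. On the Hilbert space H = ℓ²(ℕ × Bool, ℂ), let D₀ be the operator defined on the dense subspace of finitely supported elements by (D₀ξ)(n, b) = ℓ_n⁻¹ · ξ(n, ¬b). Then the closure D of D₀ is self-adjoint, and for every λ ∈ ℂ \ ℝ its resolvent is compact: there is a compact bounded operator R on H with Ry ∈ Dom D and D(Ry) − λ·Ry = y for all y ∈ H, and R(Dx − λx) = x for all x ∈ Dom D. -/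
/-- The Hilbert space `ℓ²(ℕ × Bool, ℂ)`. -/
noncomputable abbrev CantorH : Type := lp (fun _ : ℕ × Bool => ℂ) 2

/-!
On each block `{(n, false), (n, true)}` the operator acts as `ℓ_n⁻¹ [[0, 1], [1, 0]]`. More
generally let `(T x) i = a i * x (σ i)` on its maximal domain, for an involution `σ` and real
`σ`-invariant weights `a`. Testing against basis vectors shows that every restriction of `T` to a
domain containing the finitely supported vectors (such as `D₀`, or `T` itself) has adjoint `T`.
So `T` is self-adjoint, in particular closed, and since truncation to `σ`-invariant finite sets
commutes with `T`, it is the closure of `D₀`. The resolvent is explicit blockwise, through the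
eigenvalues `±a i`: it is built from multiplication operators by `(±a i - λ)⁻¹` and bounded maps.
When `|a i| → ∞` these symbols tend to zero, so the multiplication operators are norm limits of
finite-rank truncations, hence compact.
-/

open Filter Topology
open scoped lp ENNReal LinearPMap

noncomputable section

namespace CantorSpectralTriple

variable {ι : Type*}

theorem norm_le_of_forall_norm_apply_le {x y : ℓ²(ι, ℂ)} {C : ℝ} (hC : 0 ≤ C)
    (h : ∀ i, ‖x i‖ ≤ C * ‖y i‖) : ‖x‖ ≤ C * ‖y‖ := by
  have hpt : ∀ i, ‖x i‖ ≤ ‖((C : ℂ) • y) i‖ := fun i => by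
    rw [lp.coeFn_smul, Pi.smul_apply, norm_smul, Complex.norm_real, Real.norm_of_nonneg hC]
    exact h i
  calc ‖x‖ ≤ ‖(C : ℂ) • y‖ := lp.norm_mono two_ne_zero hpt
    _ = C * ‖y‖ := by rw [lp.norm_const_smul two_ne_zero, Complex.norm_real, Real.norm_of_nonneg hC]

def mulCLM (c : ℓ^∞(ι, ℂ)) : ℓ²(ι, ℂ) →L[ℂ] ℓ²(ι, ℂ) :=
  LinearMap.mkContinuous
    { toFun x := ⟨⇑c * ⇑x, ((lp.memℓp x).norm.const_mul ‖c‖).mono fun i => by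
          simpa using mul_le_mul_of_nonneg_right
            (lp.norm_apply_le_norm ENNReal.top_ne_zero c i) (norm_nonneg (x i))⟩
      map_add' x y := lp.ext <| funext fun i => mul_add (c i) (x i) (y i)
      map_smul' a x := lp.ext <| funext fun i => mul_left_comm (c i) a (x i) }
    ‖c‖ fun x => norm_le_of_forall_norm_apply_le (norm_nonneg c) fun i => by
      simpa using mul_le_mul_of_nonneg_right
        (lp.norm_apply_le_norm ENNReal.top_ne_zero c i) (norm_nonneg (x i))

@[simp] theorem mulCLM_apply (c : ℓ^∞(ι, ℂ)) (x : ℓ²(ι, ℂ)) (i : ι) :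
    mulCLM c x i = c i * x i := rfl

theorem memℓp_comp_perm (σ : Equiv.Perm ι) (x : ℓ²(ι, ℂ)) : Memℓp (⇑x ∘ σ) 2 := by
  rw [memℓp_gen_iff (by norm_num)]
  exact (σ.summable_iff (f := fun i => ‖x i‖ ^ (2 : ℝ≥0∞).toReal)).2
    ((lp.memℓp x).summable (by norm_num))

def permCLM (σ : Equiv.Perm ι) : ℓ²(ι, ℂ) →L[ℂ] ℓ²(ι, ℂ) :=
  LinearMap.mkContinuous
    { toFun x := ⟨⇑x ∘ σ, memℓp_comp_perm σ x⟩
      map_add' _ _ := rfl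
      map_smul' _ _ := rfl }
    1 fun x => by
      rw [one_mul]
      refine lp.norm_le_of_tsum_le (by norm_num) (norm_nonneg x) ?_
      rw [lp.norm_rpow_eq_tsum (by norm_num)]
      exact (σ.tsum_eq (fun i => ‖x i‖ ^ (2 : ℝ≥0∞).toReal)).le

@[simp] theorem permCLM_apply (σ : Equiv.Perm ι) (x : ℓ²(ι, ℂ)) (i : ι) :
    permCLM σ x i = x (σ i) := rfl

section Truncate

variable [DecidableEq ι]

def truncate (s : Finset ι) : ℓ²(ι, ℂ) →L[ℂ] ℓ²(ι, ℂ) :=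
  ∑ i ∈ s, (lp.singleContinuousLinearMap ℂ _ 2 i).comp (lp.evalCLM ℂ (fun _ : ι => ℂ) 2 i)

theorem truncate_eq_sum (s : Finset ι) (x : ℓ²(ι, ℂ)) :
    truncate s x = ∑ i ∈ s, lp.single 2 i (x i) := by
  simp only [truncate, FunLike.coe_sum, Finset.sum_apply, ContinuousLinearMap.comp_apply,
    lp.singleContinuousLinearMap_apply]
  rfl

theorem truncate_apply (s : Finset ι) (x : ℓ²(ι, ℂ)) (j : ι) :
    truncate s x j = if j ∈ s then x j else 0 := by
  rw [truncate_eq_sum, lp.coeFn_sum, Finset.sum_apply]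
  simp only [lp.coeFn_single, Finset.sum_pi_single]

theorem tendsto_truncate (x : ℓ²(ι, ℂ)) : Tendsto (fun s => truncate s x) atTop (𝓝 x) := by
  simp only [truncate_eq_sum]
  exact lp.hasSum_single ENNReal.ofNat_ne_top x

theorem finite_support_truncate (s : Finset ι) (x : ℓ²(ι, ℂ)) :
    (Function.support ⇑(truncate s x)).Finite :=
  s.finite_toSet.subset fun j hj => by
    by_contra h
    exact hj (by simp [truncate_apply, show j ∉ s from h])

theorem isCompactOperator_truncate (s : Finset ι) : IsCompactOperator (truncate s) := by
  refine Submodule.sum_mem (compactOperator (RingHom.id ℂ) _ _) fun i _ => ?_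
  exact (isCompactOperator_of_locallyCompactSpace_rng
    (lp.singleContinuousLinearMap ℂ (fun _ : ι => ℂ) 2 i)).comp_clm
    (lp.evalCLM ℂ (fun _ : ι => ℂ) 2 i)

end Truncate

theorem isCompactOperator_mulCLM (c : ℓ^∞(ι, ℂ)) (hc : Tendsto (⇑c) cofinite (𝓝 0)) :
    IsCompactOperator (mulCLM c) := by
  classical
  refine isCompactOperator_of_tendsto (l := atTop) (F := fun s => truncate s ∘L mulCLM c) ?_
    (Eventually.of_forall fun s => (isCompactOperator_truncate s).comp_clm _)
  rw [Metric.tendsto_atTop]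
  intro ε hε
  have hsmall : ∀ᶠ i in cofinite, ‖c i‖ ≤ ε / 2 :=
    (hc.norm.eventually (ge_mem_nhds (by simpa using half_pos hε)))
  refine ⟨(eventually_cofinite.1 hsmall).toFinset, fun s hs => ?_⟩
  rw [dist_eq_norm]
  refine lt_of_le_of_lt (ContinuousLinearMap.opNorm_le_bound _ (half_pos hε).le fun x =>
    norm_le_of_forall_norm_apply_le (half_pos hε).le fun i => ?_) (half_lt_self hε)
  by_cases hi : i ∈ s
  · simp only [sub_apply, ContinuousLinearMap.comp_apply, AddSubgroupClass.coe_sub,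
      PreLp.sub_apply, truncate_apply, hi, ↓reduceIte, mulCLM_apply, sub_self, norm_zero]
    positivity
  · have : ‖c i‖ ≤ ε / 2 := by
      by_contra h
      exact hi (hs (by simpa using h))
    simpa [truncate_apply, hi] using mul_le_mul_of_nonneg_right this (norm_nonneg (x i))

theorem finite_support_single [DecidableEq ι] (i : ι) (c : ℂ) :
    (Function.support ⇑(lp.single 2 i c : ℓ²(ι, ℂ))).Finite := by
  rw [lp.coeFn_single]
  exact (Set.finite_singleton i).subset Pi.support_single_subset

theorem dense_of_finite_support_mem {p : Submodule ℂ ℓ²(ι, ℂ)}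
    (hp : ∀ x : ℓ²(ι, ℂ), (Function.support ⇑x).Finite → x ∈ p) : Dense (p : Set ℓ²(ι, ℂ)) := by
  classical
  exact fun x => mem_closure_of_tendsto (tendsto_truncate x)
    (Eventually.of_forall fun s => hp _ (finite_support_truncate s x))

section WeightedFlip

variable (a : ι → ℝ) (σ : Equiv.Perm ι)

def weightedFlip : ℓ²(ι, ℂ) →ₗ.[ℂ] ℓ²(ι, ℂ) where
  domain :=
    { carrier := {x | Memℓp (fun i => (a i : ℂ) * x (σ i)) 2}
      add_mem' := fun {x y} hx hy => by simpa [Pi.add_def, mul_add] using hx.add hy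
      zero_mem' := by simpa [Pi.zero_def] using zero_memℓp
      smul_mem' := fun c x hx => by simpa [mul_left_comm] using hx.const_mul c }
  toFun :=
    { toFun x := ⟨fun i => (a i : ℂ) * (x : ℓ²(ι, ℂ)) (σ i), x.2⟩
      map_add' x y := lp.ext <| funext fun i => mul_add _ (x.1 (σ i)) (y.1 (σ i))
      map_smul' c x := lp.ext <| funext fun i => mul_left_comm _ c (x.1 (σ i)) }

variable {a σ}

theorem mem_weightedFlip_domain {x : ℓ²(ι, ℂ)} :
    x ∈ (weightedFlip a σ).domain ↔ Memℓp (fun i => (a i : ℂ) * x (σ i)) 2 := Iff.rfl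

@[simp] theorem weightedFlip_apply (x : (weightedFlip a σ).domain) (i : ι) :
    weightedFlip a σ x i = a i * (x : ℓ²(ι, ℂ)) (σ i) := rfl

theorem mem_weightedFlip_domain_of_finite {x : ℓ²(ι, ℂ)} (hx : (Function.support ⇑x).Finite) :
    x ∈ (weightedFlip a σ).domain := by
  refine (memℓp_zero ?_).of_exponent_ge (by norm_num)
  refine (hx.preimage σ.injective.injOn).subset fun i hi => ?_
  exact right_ne_zero_of_mul hi

theorem weightedFlip_truncate [DecidableEq ι] {s : Finset ι} (hs : ∀ i, σ i ∈ s ↔ i ∈ s)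
    (x : (weightedFlip a σ).domain) (h : truncate s x ∈ (weightedFlip a σ).domain) :
    weightedFlip a σ ⟨truncate s x, h⟩ = truncate s (weightedFlip a σ x) := by
  refine lp.ext <| funext fun i => ?_
  simp only [weightedFlip_apply, truncate_apply, hs]
  split_ifs <;> simp

variable (hσ : Function.Involutive σ) (ha : ∀ i, a (σ i) = a i)
include hσ ha

theorem weightedFlip_single [DecidableEq ι] (j : ι) (c : ℂ)
    (h : (lp.single 2 j c : ℓ²(ι, ℂ)) ∈ (weightedFlip a σ).domain) :
    weightedFlip a σ ⟨lp.single 2 j c, h⟩ = (lp.single 2 (σ j) (a j * c) : ℓ²(ι, ℂ)) := by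
  refine lp.ext <| funext fun k => ?_
  rw [weightedFlip_apply, lp.coeFn_single, lp.coeFn_single]
  by_cases hk : k = σ j
  · subst hk
    rw [hσ j, ha, Pi.single_eq_same, Pi.single_eq_same]
  · have : σ k ≠ j := fun h => hk (by rw [← h, hσ k])
    rw [Pi.single_eq_of_ne this, Pi.single_eq_of_ne hk, mul_zero]

theorem inner_weightedFlip_left (x y : (weightedFlip a σ).domain) :
    inner ℂ (weightedFlip a σ x) (y : ℓ²(ι, ℂ)) = inner ℂ (x : ℓ²(ι, ℂ)) (weightedFlip a σ y) := by
  rw [lp.inner_eq_tsum, lp.inner_eq_tsum, ← σ.tsum_eq]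
  refine tsum_congr fun i => ?_
  simp only [weightedFlip_apply, ha, hσ i, RCLike.inner_apply, map_mul, Complex.conj_ofReal]
  ring

section Restriction

variable {S : ℓ²(ι, ℂ) →ₗ.[ℂ] ℓ²(ι, ℂ)} (hle : S ≤ weightedFlip a σ)
  (hfin : ∀ x : ℓ²(ι, ℂ), (Function.support ⇑x).Finite → x ∈ S.domain)
include hle hfin

theorem adjoint_apply_eq_weightedFlip (y : S†.domain) (i : ι) :
    S† y i = a i * (y : ℓ²(ι, ℂ)) (σ i) := by
  classical
  have hi := hfin _ (finite_support_single i 1)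
  have h := LinearPMap.adjoint_isFormalAdjoint (dense_of_finite_support_mem hfin) y ⟨_, hi⟩
  rw [hle.2 (y := ⟨_, hle.1 hi⟩) rfl, weightedFlip_single hσ ha, lp.inner_single_right,
    lp.inner_single_right] at h
  simpa [mul_comm] using congrArg (starRingEnd ℂ) h

theorem adjoint_eq_weightedFlip : S† = weightedFlip a σ := by
  have hsymm : S.IsFormalAdjoint (weightedFlip a σ) := fun x y => by
    rw [hle.2 (y := ⟨x, hle.1 x.2⟩) rfl, inner_weightedFlip_left hσ ha]
  have hcoord (y : S†.domain) : ⇑(S† y) = fun i => (a i : ℂ) * (y : ℓ²(ι, ℂ)) (σ i) :=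
    funext (adjoint_apply_eq_weightedFlip hσ ha hle hfin y)
  refine LinearPMap.ext (le_antisymm (fun y hy => ?_)
    (hsymm.le_adjoint (dense_of_finite_support_mem hfin)).1) fun y hy _ => lp.ext (hcoord ⟨y, hy⟩)
  simpa [mem_weightedFlip_domain, ← hcoord ⟨y, hy⟩] using lp.memℓp (S† ⟨y, hy⟩)

theorem closure_eq_weightedFlip : S.closure = weightedFlip a σ := by
  classical
  have hclosed : (weightedFlip a σ).IsClosed := adjoint_eq_weightedFlip hσ ha hle hfin ▸
    LinearPMap.adjoint_isClosed (dense_of_finite_support_mem hfin)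
  have hclosable : S.IsClosable := hclosed.isClosable.leIsClosable hle
  refine LinearPMap.eq_of_eq_graph ?_
  rw [← hclosable.graph_closure_eq_closure_graph]
  refine le_antisymm (S.graph.topologicalClosure_minimal (LinearPMap.le_graph_of_le hle) hclosed) ?_
  intro z hz
  obtain ⟨x, rfl⟩ := (LinearPMap.mem_graph_iff' _).1 hz
  let u (s : Finset ι) := s ∪ s.image σ
  have hu : Tendsto u atTop atTop :=
    tendsto_atTop_mono (fun s => Finset.subset_union_left) tendsto_id
  have hinv (s : Finset ι) (i : ι) : σ i ∈ u s ↔ i ∈ u s := by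
    have hσi (k : ι) : σ k = i ↔ k = σ i := ⟨fun h => by rw [← h, hσ], fun h => by rw [h, hσ]⟩
    simp [u, hσ.injective.eq_iff, hσi, or_comm]
  rw [← SetLike.mem_coe, Submodule.topologicalClosure_coe]
  refine mem_closure_of_tendsto (((tendsto_truncate (x : ℓ²(ι, ℂ))).comp hu).prodMk_nhds
    ((tendsto_truncate (weightedFlip a σ x)).comp hu)) (Eventually.of_forall fun s => ?_)
  have hs := hfin _ (finite_support_truncate (u s) x)
  convert S.mem_graph ⟨_, hs⟩ using 2
  rw [hle.2 (y := ⟨_, hle.1 hs⟩) rfl, weightedFlip_truncate (hinv s)]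
  rfl

end Restriction

theorem weightedFlip_isSelfAdjoint : IsSelfAdjoint (weightedFlip a σ) :=
  adjoint_eq_weightedFlip hσ ha le_rfl fun _ hx => mem_weightedFlip_domain_of_finite hx

end WeightedFlip

section Resolvent

variable {lam : ℂ} (hlam : lam.im ≠ 0)
include hlam

theorem ofReal_sub_ne_zero (t : ℝ) : (t : ℂ) - lam ≠ 0 :=
  sub_ne_zero.2 fun h => hlam (by simpa using congrArg Complex.im h.symm)

theorem norm_inv_ofReal_sub_le (t : ℝ) : ‖((t : ℂ) - lam)⁻¹‖ ≤ |lam.im|⁻¹ := by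
  rw [norm_inv]
  refine inv_anti₀ (abs_pos.2 hlam) ?_
  simpa using Complex.abs_im_le_norm ((t : ℂ) - lam)

variable (a : ι → ℝ)

def resolventSymbol : ℓ^∞(ι, ℂ) :=
  ⟨fun i => ((a i : ℂ) - lam)⁻¹, memℓp_infty ⟨|lam.im|⁻¹, by
    rintro _ ⟨i, rfl⟩
    exact norm_inv_ofReal_sub_le hlam (a i)⟩⟩

@[simp] theorem resolventSymbol_apply (i : ι) : resolventSymbol hlam a i = ((a i : ℂ) - lam)⁻¹ :=
  rfl

theorem tendsto_resolventSymbol (ha : Tendsto (fun i => |a i|) cofinite atTop) :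
    Tendsto (⇑(resolventSymbol hlam a)) cofinite (𝓝 0) := by
  have hnorm : Tendsto (fun i => ‖(a i : ℂ) - lam‖) cofinite atTop := by
    refine tendsto_atTop_mono (fun i => ?_) (tendsto_atTop_add_const_right _ (-‖lam‖) ha)
    simpa [sub_eq_add_neg] using norm_sub_norm_le (a i : ℂ) lam
  rw [tendsto_zero_iff_norm_tendsto_zero]
  simpa [Function.comp_def] using tendsto_inv_atTop_zero.comp hnorm

variable (σ : Equiv.Perm ι)

/-- With `A` the multiplication by `a` and `F = permCLM σ`, the operator is `A F = F A` and
`F² = 1`, so `(T - lam)⁻¹ = (A - lam)⁻¹ P₊ + (-A - lam)⁻¹ P₋` with `P± = (1 ± F) / 2`. -/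
def weightedFlipResolvent : ℓ²(ι, ℂ) →L[ℂ] ℓ²(ι, ℂ) :=
  (2 : ℂ)⁻¹ • (mulCLM (resolventSymbol hlam a) ∘L (1 + permCLM σ) +
    mulCLM (resolventSymbol hlam (-a)) ∘L (1 - permCLM σ))

theorem weightedFlipResolvent_apply (y : ℓ²(ι, ℂ)) (i : ι) :
    weightedFlipResolvent hlam a σ y i =
      (((a i : ℂ) - lam)⁻¹ * (y i + y (σ i)) + (-(a i : ℂ) - lam)⁻¹ * (y i - y (σ i))) / 2 := by
  change (2 : ℂ)⁻¹ * (((a i : ℂ) - lam)⁻¹ * (y i + y (σ i)) +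
    (((-a i : ℝ) : ℂ) - lam)⁻¹ * (y i - y (σ i))) = _
  push_cast
  ring

theorem isCompactOperator_weightedFlipResolvent (ha : Tendsto (fun i => |a i|) cofinite atTop) :
    IsCompactOperator (weightedFlipResolvent hlam a σ) := by
  have hcompact (b : ι → ℝ) (hb : Tendsto (fun i => |b i|) cofinite atTop) (F) :
      mulCLM (resolventSymbol hlam b) ∘L F ∈ compactOperator (RingHom.id ℂ) ℓ²(ι, ℂ) ℓ²(ι, ℂ) :=
    (isCompactOperator_mulCLM _ (tendsto_resolventSymbol hlam b hb)).comp_clm F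
  exact Submodule.smul_mem _ _ <| Submodule.add_mem _ (hcompact a ha _)
    (hcompact (-a) (by simpa using ha) _)

variable {a σ} (hσ : Function.Involutive σ) (ha : ∀ i, a (σ i) = a i)
include hσ ha

theorem mul_weightedFlipResolvent_apply (y : ℓ²(ι, ℂ)) (i : ι) :
    a i * weightedFlipResolvent hlam a σ y (σ i) =
      y i + lam * weightedFlipResolvent hlam a σ y i := by
  have h₁ := ofReal_sub_ne_zero hlam (a i)
  have h₂ := ofReal_sub_ne_zero hlam (-a i)
  rw [Complex.ofReal_neg] at h₂
  rw [weightedFlipResolvent_apply, weightedFlipResolvent_apply, hσ i, ha]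
  field_simp
  ring

theorem isResolvent_weightedFlipResolvent :
    IsResolvent (weightedFlip a σ) lam (weightedFlipResolvent hlam a σ) := by
  set R := weightedFlipResolvent hlam a σ
  have hmem (y : ℓ²(ι, ℂ)) : R y ∈ (weightedFlip a σ).domain := by
    rw [mem_weightedFlip_domain]
    convert lp.memℓp (y + lam • R y) using 1
    exact funext fun i => mul_weightedFlipResolvent_apply hlam hσ ha y i
  refine ⟨fun y => ⟨hmem y, lp.ext <| funext fun i => ?_⟩, fun x => lp.ext <| funext fun i => ?_⟩
  · change a i * R y (σ i) - lam * R y i = y i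
    rw [mul_weightedFlipResolvent_apply hlam hσ ha]
    ring
  · have hcoord (j : ι) : (weightedFlip a σ x - lam • (x : ℓ²(ι, ℂ))) j =
        a j * (x : ℓ²(ι, ℂ)) (σ j) - lam * (x : ℓ²(ι, ℂ)) j := rfl
    have h₁ := ofReal_sub_ne_zero hlam (a i)
    have h₂ := ofReal_sub_ne_zero hlam (-a i)
    rw [Complex.ofReal_neg] at h₂
    rw [weightedFlipResolvent_apply, hcoord, hcoord, hσ i, ha]
    field_simp
    ring

end Resolvent

def flipBool : Equiv.Perm (ℕ × Bool) := Equiv.prodCongr (Equiv.refl ℕ) Equiv.boolNot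

theorem flipBool_involutive : Function.Involutive flipBool :=
  fun p => Prod.ext rfl (Bool.not_not p.2)

theorem tendsto_abs_inv_fst {ℓ : ℕ → ℝ} (hpos : ∀ n, 0 < ℓ n) (hlim : Tendsto ℓ atTop (𝓝 0)) :
    Tendsto (fun p : ℕ × Bool => |(ℓ p.1)⁻¹|) cofinite atTop := by
  have hinv : Tendsto (fun n => (ℓ n)⁻¹) atTop atTop :=
    (tendsto_nhdsWithin_iff.2 ⟨hlim, Eventually.of_forall hpos⟩).inv_tendsto_nhdsGT_zero
  have hfst : Tendsto (Prod.fst : ℕ × Bool → ℕ) cofinite atTop := by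
    rw [← Nat.cofinite_eq_atTop]
    refine Tendsto.cofinite_of_finite_preimage_singleton fun n => Set.Finite.to_subtype ?_
    exact ((Set.finite_singleton n).prod Set.finite_univ).subset fun p hp => by simpa using hp
  exact (tendsto_abs_atTop_atTop.comp hinv).comp hfst

end CantorSpectralTriple

end

open CantorSpectralTriple in
/-- **Connes' Cantor-set spectral triple, compact resolvent.** If
`ℓ_n > 0` and `ℓ_n → 0`, then the closure `D` of the operator
`(D₀ξ)(n, b) = ℓ_n⁻¹ ξ(n, ¬b)` (defined on finitely supported elements of
`ℓ²(ℕ × Bool)`) is self-adjoint and has compact resolvent. -/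
theorem stmt16
    (ℓ : ℕ → ℝ) (hpos : ∀ n, 0 < ℓ n) (hlim : Filter.Tendsto ℓ Filter.atTop (nhds 0))
    (D₀ : CantorH →ₗ.[ℂ] CantorH)
    (hdom : (D₀.domain : Set CantorH) =
      {x : CantorH | (Function.support fun p : ℕ × Bool => x p).Finite})
    (hact : ∀ (ξ : D₀.domain) (n : ℕ) (b : Bool),
      (D₀ ξ) (n, b) = (ℓ n)⁻¹ • (ξ : CantorH) (n, !b)) :
    IsSelfAdjoint D₀.closure ∧
    ∀ lam : ℂ, lam.im ≠ 0 →
      ∃ R : CantorH →L[ℂ] CantorH,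
        IsCompactOperator R ∧ IsResolvent D₀.closure lam R := by
  set a : ℕ × Bool → ℝ := fun p => (ℓ p.1)⁻¹
  have ha : ∀ p, a (flipBool p) = a p := fun _ => rfl
  have hfin (x : CantorH) (hx : (Function.support ⇑x).Finite) : x ∈ D₀.domain := by
    rw [← SetLike.mem_coe, hdom]
    exact hx
  have hle : D₀ ≤ weightedFlip a flipBool := by
    refine ⟨fun x hx => mem_weightedFlip_domain_of_finite ?_, fun x y hxy => ?_⟩
    · rw [← SetLike.mem_coe, hdom] at hx
      exact hx
    · refine lp.ext <| funext fun ⟨n, b⟩ => ?_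
      rw [hact, weightedFlip_apply, ← hxy, Complex.real_smul]
      rfl
  have hclosure := closure_eq_weightedFlip flipBool_involutive ha hle hfin
  refine ⟨hclosure ▸ weightedFlip_isSelfAdjoint flipBool_involutive ha, fun lam hlam =>
    ⟨weightedFlipResolvent hlam a flipBool, ?_, ?_⟩⟩
  · exact isCompactOperator_weightedFlipResolvent hlam a flipBool (tendsto_abs_inv_fst hpos hlim)
  · exact hclosure ▸ isResolvent_weightedFlipResolvent hlam flipBool_involutive ha
end

section
/- (Connes' Cantor-set spectral triple, resolvent estimate) Let ℓ : ℕ → ℝ be a decreasing sequence with ℓ_n > 0 and ℓ_n → 0, let H = ℓ²(ℕ × Bool, ℂ), let D be the closure of the operator defined on finitely supported elements by (D₀ξ)(n, b) = ℓ_n⁻¹ · ξ(n, ¬b), and let R = R_i(D) be the resolvent at λ = i. For j ∈ ℕ, let P_j be the orthogonal projection of H onto the subspace of elements supported in {(n, b) : n ≤ j}. Then ‖P_j R P_j − R‖ ≤ ℓ_{j+1}; in particular ‖P_j R P_j − R‖ ≤ ℓ_j and P_j R P_j → R in operator norm. -/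
open Filter Topology

/-!
`D₀` preserves each block `span {δ_(n,false), δ_(n,true)}`, acting there as `ℓ_n⁻¹` times the
swap `σ`; hence `R` acts on that block as `α + β σ` with `α = i / (ℓ_n⁻² + 1)`,
`β = ℓ_n⁻¹ / (ℓ_n⁻² + 1)`, of norm `(ℓ_n⁻² + 1)^(-1/2) ≤ ℓ_n`. Being blockwise, `R` commutes
with `P_j`, so `P_j R P_j - R = -R (1 - P_j)` only sees the blocks `n > j`, where `ℓ_n ≤ ℓ_(j+1)`.
-/

open ENNReal in
theorem lp.norm_le_mul_of_forall_sum_fiber_le {ι κ : Type*} [Fintype κ]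
    {E F : ι × κ → Type*} [∀ q, NormedAddCommGroup (E q)] [∀ q, NormedAddCommGroup (F q)]
    {f : lp E 2} {z : lp F 2} {M : ℝ} (hM : 0 ≤ M)
    (h : ∀ i, ∑ k, ‖f (i, k)‖ ^ 2 ≤ M ^ 2 * ∑ k, ‖z (i, k)‖ ^ 2) : ‖f‖ ≤ M * ‖z‖ := by
  classical
  have hp : 0 < (2 : ℝ≥0∞).toReal := by norm_num
  refine lp.norm_le_of_forall_sum_le hp (by positivity) fun s => ?_
  simp only [ENNReal.toReal_ofNat, Real.rpow_two]
  set t := s.image Prod.fst ×ˢ (Finset.univ : Finset κ)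
  have hst : s ⊆ t := fun q hq =>
    Finset.mem_product.2 ⟨Finset.mem_image_of_mem _ hq, Finset.mem_univ _⟩
  calc ∑ q ∈ s, ‖f q‖ ^ 2
      ≤ ∑ q ∈ t, ‖f q‖ ^ 2 := Finset.sum_le_sum_of_subset_of_nonneg hst fun _ _ _ => by positivity
    _ = ∑ i ∈ s.image Prod.fst, ∑ k, ‖f (i, k)‖ ^ 2 := Finset.sum_product ..
    _ ≤ ∑ i ∈ s.image Prod.fst, M ^ 2 * ∑ k, ‖z (i, k)‖ ^ 2 := Finset.sum_le_sum fun i _ => h i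
    _ = M ^ 2 * ∑ q ∈ t, ‖z q‖ ^ 2 := by simp only [t, Finset.mul_sum, Finset.sum_product]
    _ ≤ M ^ 2 * ‖z‖ ^ 2 := by
        gcongr
        simpa only [ENNReal.toReal_ofNat, Real.rpow_two] using lp.sum_rpow_le_norm_rpow hp z t
    _ = (M * ‖z‖) ^ 2 := by ring

theorem IsResolvent.apply_sub_smul_of_le {K : Type*} [NormedAddCommGroup K]
    [InnerProductSpace ℂ K] {S T : K →ₗ.[ℂ] K} {lam : ℂ} {R : K →L[ℂ] K}
    (hR : IsResolvent S lam R) (hTS : T ≤ S) (x : T.domain) :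
    R (T x - lam • (x : K)) = x := by
  rw [hTS.2 (y := ⟨x, hTS.1 x.2⟩) rfl]
  exact hR.2 ⟨x, hTS.1 x.2⟩

/-- `(u σ - i)⁻¹ = resolventCoeffDiag u + resolventCoeffOff u • σ` for any involution `σ`. -/
noncomputable def resolventCoeffDiag (u : ℝ) : ℂ := Complex.I * (((u ^ 2 + 1)⁻¹ : ℝ) : ℂ)

noncomputable def resolventCoeffOff (u : ℝ) : ℂ := ((u * (u ^ 2 + 1)⁻¹ : ℝ) : ℂ)

theorem resolvent_apply_of_swap {K F : Type*} [AddCommGroup K] [Module ℂ K] [FunLike F K K]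
    [LinearMapClass F ℂ K K] (R : F) (u : ℝ) (v w : K)
    (hv : R ((u : ℂ) • w - Complex.I • v) = v) (hw : R ((u : ℂ) • v - Complex.I • w) = w) :
    R v = resolventCoeffDiag u • v + resolventCoeffOff u • w := by
  have hv_eq : v = resolventCoeffDiag u • ((u : ℂ) • w - Complex.I • v)
      + resolventCoeffOff u • ((u : ℂ) • v - Complex.I • w) := by
    have hne : (u : ℂ) ^ 2 + 1 ≠ 0 := by exact_mod_cast (by positivity : u ^ 2 + 1 ≠ 0)
    simp only [resolventCoeffDiag, resolventCoeffOff]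
    match_scalars <;> field_simp
    · linear_combination Complex.I_sq
    · ring
  conv_lhs => rw [hv_eq, map_add, map_smul, map_smul, hv, hw]

theorem norm_sq_resolventCoeff_add (u : ℝ) (a b : ℂ) :
    ‖resolventCoeffDiag u * a + resolventCoeffOff u * b‖ ^ 2
      + ‖resolventCoeffDiag u * b + resolventCoeffOff u * a‖ ^ 2
      = (u ^ 2 + 1)⁻¹ * (‖a‖ ^ 2 + ‖b‖ ^ 2) := by
  have hne : u ^ 2 + 1 ≠ 0 := by positivity
  simp only [resolventCoeffDiag, resolventCoeffOff, Complex.sq_norm, Complex.normSq_apply,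
    Complex.add_re, Complex.add_im, Complex.mul_re, Complex.mul_im, Complex.I_re, Complex.I_im,
    Complex.ofReal_re, Complex.ofReal_im]
  field_simp
  ring

section CantorResolvent

variable {ℓ : ℕ → ℝ} {D₀ : CantorH →ₗ.[ℂ] CantorH} {R : CantorH →L[ℂ] CantorH}

theorem cantor_single_mem_domain
    (hdom : (D₀.domain : Set CantorH) =
      {x : CantorH | (Function.support fun p : ℕ × Bool => x p).Finite})
    (q : ℕ × Bool) : lp.single 2 q (1 : ℂ) ∈ D₀.domain := by
  change _ ∈ (D₀.domain : Set CantorH)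
  rw [hdom]
  refine (Set.finite_singleton q).subset fun r hr => ?_
  by_contra hrq
  exact hr (lp.single_apply_ne 2 q 1 hrq)

theorem cantor_apply_single
    (hact : ∀ (ξ : D₀.domain) (n : ℕ) (b : Bool),
      (D₀ ξ) (n, b) = (ℓ n)⁻¹ • (ξ : CantorH) (n, !b))
    (n : ℕ) (b : Bool) (h : lp.single 2 (n, b) (1 : ℂ) ∈ D₀.domain) :
    D₀ ⟨_, h⟩ = (((ℓ n)⁻¹ : ℝ) : ℂ) • lp.single 2 (n, !b) (1 : ℂ) := by
  refine lp.ext (funext fun ⟨m, c⟩ => ?_)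
  rw [hact]
  obtain rfl | hmn := eq_or_ne m n
  · cases b <;> cases c <;> simp [lp.single_apply, Complex.real_smul]
  · simp [lp.single_apply, hmn]

theorem cantor_resolvent_single
    (hdom : (D₀.domain : Set CantorH) =
      {x : CantorH | (Function.support fun p : ℕ × Bool => x p).Finite})
    (hact : ∀ (ξ : D₀.domain) (n : ℕ) (b : Bool),
      (D₀ ξ) (n, b) = (ℓ n)⁻¹ • (ξ : CantorH) (n, !b))
    (hR : IsResolvent D₀.closure Complex.I R) (n : ℕ) (b : Bool) :
    R (lp.single 2 (n, b) 1) = resolventCoeffDiag (ℓ n)⁻¹ • lp.single 2 (n, b) 1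
      + resolventCoeffOff (ℓ n)⁻¹ • lp.single 2 (n, !b) 1 := by
  have hswap : ∀ b, R ((((ℓ n)⁻¹ : ℝ) : ℂ) • lp.single 2 (n, !b) 1
      - Complex.I • lp.single 2 (n, b) 1) = lp.single 2 (n, b) 1 := fun b => by
    have := hR.apply_sub_smul_of_le D₀.le_closure ⟨_, cantor_single_mem_domain hdom (n, b)⟩
    rwa [cantor_apply_single hact] at this
  refine resolvent_apply_of_swap R _ _ _ (hswap b) ?_
  simpa using hswap (!b)

theorem cantor_resolvent_apply
    (hdom : (D₀.domain : Set CantorH) =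
      {x : CantorH | (Function.support fun p : ℕ × Bool => x p).Finite})
    (hact : ∀ (ξ : D₀.domain) (n : ℕ) (b : Bool),
      (D₀ ξ) (n, b) = (ℓ n)⁻¹ • (ξ : CantorH) (n, !b))
    (hR : IsResolvent D₀.closure Complex.I R) (z : CantorH) (n : ℕ) (b : Bool) :
    R z (n, b) = resolventCoeffDiag (ℓ n)⁻¹ * z (n, b) + resolventCoeffOff (ℓ n)⁻¹ * z (n, !b) := by
  have hcoord : lp.evalCLM ℂ (fun _ : ℕ × Bool => ℂ) 2 (n, b) ∘L R
      = resolventCoeffDiag (ℓ n)⁻¹ • lp.evalCLM ℂ _ 2 (n, b)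
        + resolventCoeffOff (ℓ n)⁻¹ • lp.evalCLM ℂ _ 2 (n, !b) := by
    refine lp.ext_continuousLinearMap (by norm_num) fun q => ContinuousLinearMap.ext_ring ?_
    obtain ⟨m, c⟩ := q
    change R (lp.single 2 (m, c) 1) (n, b)
      = resolventCoeffDiag (ℓ n)⁻¹ * (lp.single 2 (m, c) 1 : CantorH) (n, b)
        + resolventCoeffOff (ℓ n)⁻¹ * (lp.single 2 (m, c) 1 : CantorH) (n, !b)
    rw [cantor_resolvent_single hdom hact hR]
    simp only [lp.coeFn_add, lp.coeFn_smul, Pi.add_apply, Pi.smul_apply]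
    obtain rfl | hmn := eq_or_ne m n
    · cases b <;> cases c <;> simp [lp.single_apply]
    · simp [lp.single_apply, Ne.symm hmn]
  simpa [lp.evalCLM] using congr($hcoord z)

end CantorResolvent

theorem cantor_norm_compress_resolvent_sub_le {ℓ : ℕ → ℝ} (hanti : Antitone ℓ)
    (hpos : ∀ n, 0 < ℓ n) {R : CantorH →L[ℂ] CantorH}
    (hR : ∀ (z : CantorH) (n : ℕ) (b : Bool),
      R z (n, b) = resolventCoeffDiag (ℓ n)⁻¹ * z (n, b) + resolventCoeffOff (ℓ n)⁻¹ * z (n, !b))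
    {P : ℕ → CantorH →L[ℂ] CantorH}
    (hP : ∀ (j : ℕ) (x : CantorH) (n : ℕ) (b : Bool),
      (P j x) (n, b) = if n ≤ j then x (n, b) else 0) (j : ℕ) :
    ‖P j ∘L R ∘L P j - R‖ ≤ ℓ (j + 1) := by
  refine ContinuousLinearMap.opNorm_le_bound _ (hpos _).le fun y => ?_
  refine lp.norm_le_mul_of_forall_sum_fiber_le (hpos _).le fun n => ?_
  have hcompress : ∀ b, (P j ∘L R ∘L P j - R) y (n, b) = if n ≤ j then 0
      else -(resolventCoeffDiag (ℓ n)⁻¹ * y (n, b) + resolventCoeffOff (ℓ n)⁻¹ * y (n, !b)) := by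
    intro b
    simp only [sub_apply, ContinuousLinearMap.comp_apply, lp.coeFn_sub, Pi.sub_apply, hP, hR]
    split_ifs <;> simp
  simp only [Fintype.sum_bool, hcompress, Bool.not_true, Bool.not_false]
  split_ifs with hn
  · simp only [norm_zero, zero_pow two_ne_zero, add_zero]
    positivity
  · have hcoeff : ((ℓ n)⁻¹ ^ 2 + 1)⁻¹ ≤ ℓ (j + 1) ^ 2 := calc
      ((ℓ n)⁻¹ ^ 2 + 1)⁻¹ ≤ ((ℓ n)⁻¹ ^ 2)⁻¹ :=
        inv_anti₀ (pow_pos (inv_pos.2 (hpos n)) 2) (by linarith)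
      _ = ℓ n ^ 2 := by rw [inv_pow, inv_inv]
      _ ≤ ℓ (j + 1) ^ 2 := pow_le_pow_left₀ (hpos n).le (hanti (by omega)) 2
    rw [norm_neg, norm_neg, norm_sq_resolventCoeff_add]
    gcongr

/-- **Connes' Cantor-set spectral triple, resolvent estimate.** With `ℓ`
decreasing to `0`, `D` the closure of `(D₀ξ)(n, b) = ℓ_n⁻¹ ξ(n, ¬b)`, `R` the resolvent
of `D` at `λ = i`, and `P_j` the projection onto elements supported in `{(n, b) : n ≤ j}`,
one has `‖P_j R P_j − R‖ ≤ ℓ_{j+1} ≤ ℓ_j`, so `P_j R P_j → R` in operator norm. -/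
theorem stmt17
    (ℓ : ℕ → ℝ) (hanti : Antitone ℓ) (hpos : ∀ n, 0 < ℓ n)
    (hlim : Tendsto ℓ atTop (𝓝 0))
    (D₀ : CantorH →ₗ.[ℂ] CantorH)
    (hdom : (D₀.domain : Set CantorH) =
      {x : CantorH | (Function.support fun p : ℕ × Bool => x p).Finite})
    (hact : ∀ (ξ : D₀.domain) (n : ℕ) (b : Bool),
      (D₀ ξ) (n, b) = (ℓ n)⁻¹ • (ξ : CantorH) (n, !b))
    (R : CantorH →L[ℂ] CantorH) (hR : IsResolvent D₀.closure Complex.I R)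
    (P : ℕ → CantorH →L[ℂ] CantorH)
    (hP : ∀ (j : ℕ) (x : CantorH) (n : ℕ) (b : Bool),
      (P j x) (n, b) = if n ≤ j then x (n, b) else 0) :
    (∀ j : ℕ, ‖P j ∘L R ∘L P j - R‖ ≤ ℓ (j + 1)) ∧
    (∀ j : ℕ, ‖P j ∘L R ∘L P j - R‖ ≤ ℓ j) ∧
    Tendsto (fun j => P j ∘L R ∘L P j) atTop (𝓝 R) := by
  have hbound := cantor_norm_compress_resolvent_sub_le hanti hpos
    (cantor_resolvent_apply hdom hact hR) hP
  refine ⟨hbound, fun j => (hbound j).trans (hanti j.le_succ), ?_⟩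
  rw [tendsto_iff_norm_sub_tendsto_zero]
  exact squeeze_zero (fun _ => norm_nonneg _) hbound (hlim.comp (tendsto_add_atTop_nat 1))
end
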